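/- arXiv:2407.17369 — 6 statements merged into one kernel-verified Lean document; each statement's English description precedes it below -/
import Mathlib

section
/- Let T be a triangulated category and E = (E_n, f_n)_{n>0} an ℕ-indexed sequence in T. Then the colimit in Mod T (the category of contravariant additive functors T → Ab) of the image of E under the Yoneda embedding is zero if and only if E is a null sequence, i.e., for every m > 0 there exists m' > m such that the composite f_{m,m'} : E_m → E_{m'} is zero. -/
open CategoryTheory Limits Pretriangulated Opposite

universe v u

variable {C : Type u} [Category.{v} C] [Preadditive C] [HasZeroObject C]
  [HasShift C ℤ] [∀ n : ℤ, (shiftFunctor C n).Additive] [Pretriangulated C]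

namespace MetricCompletion

/-- The composite `f_{m,m'} : E_m ⟶ E_{m'}` of a sequence. -/
def seqMap {E : ℕ → C} (f : ∀ n, E n ⟶ E (n + 1)) {m m' : ℕ} (h : m ≤ m') :
    E m ⟶ E m' :=
  (CategoryTheory.Functor.ofSequence f).map (homOfLE h)

/-- `Z` is a cone of `g`. -/
def IsConeOf {A B : C} (g : A ⟶ B) (Z : C) : Prop :=
  ∃ (a : B ⟶ Z) (b : Z ⟶ A⟦(1 : ℤ)⟧), Triangle.mk g a b ∈ distTriang C

/-- The cone of `g` lies in the subcategory `S`. -/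
def ConeIn (S : Set C) {A B : C} (g : A ⟶ B) : Prop :=
  ∃ Z : C, IsConeOf g Z ∧ Z ∈ S

/-- A good metric on a triangulated category. -/
def IsGoodMetric (B : ℕ → Set C) : Prop :=
  B 0 = Set.univ ∧
  (∀ t, ∀ X : C, IsZero X → X ∈ B t) ∧
  (∀ t, B (t + 1) ⊆ B t) ∧
  (∀ t, ∀ T : Triangle C, T ∈ (distTriang C) → T.obj₁ ∈ B t → T.obj₃ ∈ B t → T.obj₂ ∈ B t) ∧
  (∀ t, ∀ X ∈ B (t + 1), X⟦(1 : ℤ)⟧ ∈ B t ∧ X⟦(-1 : ℤ)⟧ ∈ B t)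

/-- `A` is a direct summand of `B`. -/
def IsSummand (A B : C) : Prop :=
  ∃ (i : A ⟶ B) (r : B ⟶ A), i ≫ r = 𝟙 A

/-- A t-structure `(X, Y)` on a triangulated category. -/
structure TStruct (X Y : Set C) : Prop where
  summand_X : ∀ A B : C, IsSummand A B → B ∈ X → A ∈ X
  summand_Y : ∀ A B : C, IsSummand A B → B ∈ Y → A ∈ Y
  hom_zero : ∀ (A B : C), A ∈ X → B ∈ Y → ∀ f : A ⟶ B, f = 0
  exists_triangle : ∀ T : C, ∃ (A B : C) (a : A ⟶ T) (b : T ⟶ B) (c : B ⟶ A⟦(1 : ℤ)⟧),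
    A ∈ X ∧ B ∈ Y ∧ Triangle.mk a b c ∈ distTriang C
  shift_mem : ∀ A ∈ X, A⟦(1 : ℤ)⟧ ∈ X

/-- The shift `Σⁿ S` of a subcategory. -/
def shiftSet (S : Set C) (n : ℤ) : Set C :=
  {A | ∃ B ∈ S, Nonempty (A ≅ B⟦n⟧)}

/-- The aisle metric associated to a t-structure with aisle `X`. -/
def aisleMetric (X : Set C) : ℕ → Set C
  | 0 => Set.univ
  | (t + 1) => shiftSet X (t + 1)

/-- The coaisle metric associated to a t-structure with coaisle `Y`. -/
def coaisleMetric (Y : Set C) : ℕ → Set C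
  | 0 => Set.univ
  | (t + 1) => shiftSet Y (-(t + 1))

/-- The module colimit of a sequence: the colimit in `Mod T = (Cᵒᵖ ⥤ Ab)` of the Yoneda
image of the sequence. -/
noncomputable def mocolim {E : ℕ → C} (f : ∀ n, E n ⟶ E (n + 1)) :
    Cᵒᵖ ⥤ AddCommGrpCat.{v} :=
  colimit (CategoryTheory.Functor.ofSequence f ⋙ preadditiveYoneda)

/-- A sequence is a null sequence. -/
def IsNullSeq {E : ℕ → C} (f : ∀ n, E n ⟶ E (n + 1)) : Prop :=
  ∀ m : ℕ, ∃ m' : ℕ, ∃ h : m < m', seqMap f h.le = 0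

/-- A sequence stabilises at a subcategory `S`. -/
def StabilisesAt {E : ℕ → C} (f : ∀ n, E n ⟶ E (n + 1)) (S : Set C) : Prop :=
  ∃ N : ℕ, ∀ m m' : ℕ, ∀ h : m < m', N ≤ m → ConeIn S (seqMap f h.le)

/-- A sequence is compactly supported at a subcategory `S`. -/
def CptSuppAt {E : ℕ → C} (f : ∀ n, E n ⟶ E (n + 1)) (S : Set C) : Prop :=
  ∀ Z ∈ S, IsZero ((mocolim f).obj (op Z))

/-- A Cauchy sequence with respect to a metric. -/
def CauchyWrt (B : ℕ → Set C) {E : ℕ → C} (f : ∀ n, E n ⟶ E (n + 1)) : Prop :=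
  ∀ t : ℕ, ∃ N : ℕ, ∀ m m' : ℕ, ∀ h : m < m', N ≤ m → ConeIn (B t) (seqMap f h.le)

/-- Compactly supported with respect to a metric. -/
def CptSuppWrt (B : ℕ → Set C) {E : ℕ → C} (f : ∀ n, E n ⟶ E (n + 1)) : Prop :=
  ∃ t : ℕ, CptSuppAt f (B t)

/-- Extension-closed subcategory. -/
def ExtClosed (R : Set C) : Prop :=
  ∀ T : Triangle C, T ∈ (distTriang C) → T.obj₁ ∈ R → T.obj₃ ∈ R → T.obj₂ ∈ R

end MetricCompletion

open MetricCompletion in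
/-- the module colimit of a sequence vanishes iff the sequence is null. -/
theorem mocolim_isZero_iff_null {C : Type u} [Category.{v} C] [Preadditive C]
    [HasZeroObject C] [HasShift C ℤ] [∀ n : ℤ, (shiftFunctor C n).Additive]
    [Pretriangulated C] {E : ℕ → C} (f : ∀ n, E n ⟶ E (n + 1)) :
    IsZero (mocolim f) ↔ IsNullSeq f := by
  constructor
  · intro hz m
    have h0 : IsZero ((mocolim f).obj (op (E m))) :=
      (Functor.isZero_iff _).1 hz (op (E m))
    have h1 : IsZero (colimit ((CategoryTheory.Functor.ofSequence f ⋙ preadditiveYoneda) ⋙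
        (evaluation Cᵒᵖ AddCommGrpCat.{v}).obj (op (E m)))) :=
      h0.of_iso (colimitObjIsoColimitCompEvaluation _ _).symm
    set G := (CategoryTheory.Functor.ofSequence f ⋙ preadditiveYoneda) ⋙
        (evaluation Cᵒᵖ AddCommGrpCat.{v}).obj (op (E m)) with hG
    have hι : colimit.ι G m (𝟙 (E m)) = 0 := by
      have : (𝟙 (colimit G)) = 0 := h1.eq_of_src _ _
      calc colimit.ι G m (𝟙 (E m))
          = (colimit.ι G m ≫ 𝟙 (colimit G)) (𝟙 (E m)) := by simp
        _ = (colimit.ι G m ≫ (0 : colimit G ⟶ colimit G)) (𝟙 (E m)) := by rw [this]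
        _ = 0 := by simp; rfl
    haveI : PreservesFilteredColimitsOfSize.{0, 0} (forget AddCommGrpCat.{v}) :=
      preservesSmallestFilteredColimits_of_preservesFilteredColimits _
    obtain ⟨j', i, hzero⟩ : ∃ (j' : ℕ) (i : m ⟶ j'), G.map i (𝟙 (E m)) = 0 := by
      have h' : colimit.ι G m (𝟙 (E m)) = colimit.ι G m (0 : ToType (G.obj m)) :=
        hι.trans (map_zero (colimit.ι G m).hom).symm
      obtain ⟨k, a, b, h⟩ := (Concrete.colimit_rep_eq_iff_exists (F := G) (i := m) (j := m) _ _).1 h'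
      exact ⟨k, a, by rw [h]; simp⟩
    have hij : m ≤ j' := leOfHom i
    refine ⟨j' + 1, Nat.lt_succ_of_le hij, ?_⟩
    have hcomp : seqMap f (Nat.lt_succ_of_le hij).le =
        seqMap f hij ≫ seqMap f (Nat.le_succ j') := by
      exact (Functor.ofSequence f).map_comp (homOfLE hij) (homOfLE (Nat.le_succ j'))
    have hz2 : seqMap f hij = 0 := by
      have : G.map i (𝟙 (E m)) = 𝟙 (E m) ≫ seqMap f hij := rfl
      rw [this, Category.id_comp] at hzero
      have : i = homOfLE hij := rfl
      exact hzero
    rw [hcomp, hz2, Limits.zero_comp]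
  · intro hnull
    rw [Functor.isZero_iff]
    intro Z
    refine IsZero.of_iso ?_ (colimitObjIsoColimitCompEvaluation _ _)
    set G := (CategoryTheory.Functor.ofSequence f ⋙ preadditiveYoneda) ⋙
        (evaluation Cᵒᵖ AddCommGrpCat.{v}).obj Z with hG
    haveI : PreservesFilteredColimitsOfSize.{0, 0} (forget AddCommGrpCat.{v}) :=
      preservesSmallestFilteredColimits_of_preservesFilteredColimits _
    have hall : ∀ x : ↑(colimit G), x = 0 := by
      intro x
      obtain ⟨n, g, rfl⟩ := Concrete.colimit_exists_rep G x
      obtain ⟨m', hlt, hmz⟩ := hnull n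
      have : colimit.ι G n g = colimit.ι G m' (G.map (homOfLE hlt.le) g) := by
        rw [← comp_apply, colimit.w]
      rw [this]
      have h2 : G.map (homOfLE hlt.le) g = (g ≫ seqMap f hlt.le : Z.unop ⟶ E m') := rfl
      have h3 : (g ≫ seqMap f hlt.le : Z.unop ⟶ E m') = 0 := by
        rw [hmz]; exact Limits.comp_zero
      rw [h2.trans h3]
      exact map_zero (colimit.ι G m').hom
    have : Subsingleton ↑(colimit G) :=
      ⟨fun a b => by rw [hall a, hall b]⟩
    exact AddCommGrpCat.isZero_of_subsingleton _
end

section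
/- Let T be a d-Calabi-Yau triangulated category (d > 0) with a t-structure (X, Y), and let E be a sequence in T with X-approximation X-seq and Y-approximation Y-seq obtained by applying the truncation functors. If E is (Σ^{d-1}X)-trivial, then so is its X-approximation; dually, if E is (Σ^{-(d-1)}Y)-trivial, then so is its Y-approximation. -/
open CategoryTheory Limits Pretriangulated Opposite

universe v u

variable {C : Type u} [Category.{v} C] [Preadditive C] [HasZeroObject C]
  [HasShift C ℤ] [∀ n : ℤ, (shiftFunctor C n).Additive] [Pretriangulated C]

namespace MetricCompletion

/-- Truncation data for a t-structure `(X, Y)`: truncation functors together with the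
functorial approximation triangles. -/
structure Truncation (X Y : Set C) where
  τX : C ⥤ C
  τY : C ⥤ C
  α : τX ⟶ 𝟭 C
  β : 𝟭 C ⟶ τY
  γ : ∀ T : C, τY.obj T ⟶ (τX.obj T)⟦(1 : ℤ)⟧
  memX : ∀ T : C, τX.obj T ∈ X
  memY : ∀ T : C, τY.obj T ∈ Y
  dist : ∀ T : C, Triangle.mk (α.app T) (β.app T) (γ T) ∈ distTriang C
  γ_natural : ∀ {T T' : C} (f : T ⟶ T'),
    τY.map f ≫ γ T' = γ T ≫ (τX.map f)⟦(1 : ℤ)⟧'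

/-- `T` is `d`-Calabi-Yau over the field `K`: `Σ^d` is a Serre functor, i.e.
`Hom(A, B) ≅ D Hom(B, Σ^d A)`. -/
def CalabiYau (K : Type*) [Field K] [CategoryTheory.Linear K C] (d : ℕ) : Prop :=
  ∀ A B : C, Nonempty ((A ⟶ B) ≃ₗ[K] ((B ⟶ A⟦(d : ℤ)⟧) →ₗ[K] K))

end MetricCompletion

section AuxSTrivial

variable {C : Type u} [Category.{v} C] [Preadditive C] [HasZeroObject C]
  [HasShift C ℤ] [∀ n : ℤ, (shiftFunctor C n).Additive] [Pretriangulated C]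

/-- Zero hom groups are preserved by shifting both arguments. -/
lemma aux_hom_zero_shift {A B : C} (n : ℤ) (h : ∀ f : A ⟶ B, f = 0)
    (g : A⟦n⟧ ⟶ B⟦n⟧) : g = 0 := by
  obtain ⟨f, rfl⟩ := (shiftFunctor C n).map_surjective g
  rw [h f, Functor.map_zero]

/-- Serre duality: if `Hom(B, A⟦d⟧) = 0` then `Hom(A, B) = 0`. -/
lemma aux_serre_zero (K : Type*) [Field K] [CategoryTheory.Linear K C] (d : ℕ)
    (hCY : MetricCompletion.CalabiYau (C := C) K d) {A B : C}
    (h : ∀ g : B ⟶ A⟦(d : ℤ)⟧, g = 0) (f : A ⟶ B) : f = 0 := by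
  obtain ⟨e⟩ := hCY A B
  have he : e f = 0 := by
    apply LinearMap.ext
    intro g
    rw [h g]
    simp
  calc f = e.symm (e f) := (e.symm_apply_apply f).symm
    _ = e.symm 0 := by rw [he]
    _ = 0 := map_zero _

end AuxSTrivial

open MetricCompletion in
/-- in a `d`-Calabi-Yau category, triviality with respect to
`Σ^{d-1} X` (resp. `Σ^{-(d-1)} Y`) passes to the aisle (resp. coaisle) approximation. -/
theorem approximation_STrivial {C : Type u} [Category.{v} C] [Preadditive C]
    [HasZeroObject C] [HasShift C ℤ] [∀ n : ℤ, (shiftFunctor C n).Additive]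
    [Pretriangulated C] (K : Type*) [Field K] [CategoryTheory.Linear K C]
    [∀ A B : C, FiniteDimensional K (A ⟶ B)]
    (d : ℕ) (hd : 0 < d) (hCY : CalabiYau (C := C) K d)
    (X Y : Set C) (hT : TStruct X Y) (tr : Truncation X Y) (E : ℕ → C) :
    ((∀ n D, IsSummand D (E n) → D ∈ shiftSet X ((d : ℤ) - 1) → IsZero D) →
      ∀ n D, IsSummand D (tr.τX.obj (E n)) → D ∈ shiftSet X ((d : ℤ) - 1) → IsZero D) ∧
    ((∀ n D, IsSummand D (E n) → D ∈ shiftSet Y (-((d : ℤ) - 1)) → IsZero D) →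
      ∀ n D, IsSummand D (tr.τY.obj (E n)) → D ∈ shiftSet Y (-((d : ℤ) - 1)) → IsZero D) := by
  constructor
  · intro hE n D hsum hD
    obtain ⟨i, r, hir⟩ := hsum
    obtain ⟨B, hB, ⟨e⟩⟩ := hD
    have hdist := tr.dist (E n)
    set Tn : Triangle C := Triangle.mk (tr.α.app (E n)) (tr.β.app (E n)) (tr.γ (E n))
      with hTn
    -- every map `(τY (E n))⟦-1⟧ ⟶ D` is zero
    have hzero : ∀ g : (tr.τY.obj (E n))⟦(-1 : ℤ)⟧ ⟶ D, g = 0 := by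
      intro g
      apply aux_serre_zero K d hCY
      intro g'
      have iso1 : ((tr.τY.obj (E n))⟦(-1 : ℤ)⟧)⟦(d : ℤ)⟧ ≅ (tr.τY.obj (E n))⟦(d : ℤ) - 1⟧ :=
        (shiftFunctorAdd' C (-1 : ℤ) (d : ℤ) ((d : ℤ) - 1) (by ring)).symm.app _
      have hm : e.inv ≫ g' ≫ iso1.hom = 0 :=
        aux_hom_zero_shift ((d : ℤ) - 1)
          (hT.hom_zero B (tr.τY.obj (E n)) hB (tr.memY (E n))) _
      calc g' = e.hom ≫ (e.inv ≫ g' ≫ iso1.hom) ≫ iso1.inv := by simp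
        _ = 0 := by rw [hm]; simp
    have hcond : Tn.invRotate.mor₁ ≫ r = 0 := hzero _
    obtain ⟨r', hr'⟩ := Triangle.yoneda_exact₂ _ (inv_rot_of_distTriang _ hdist) r hcond
    have hr'' : r = tr.α.app (E n) ≫ r' := hr'
    refine hE n D ⟨i ≫ tr.α.app (E n), r', ?_⟩ ⟨B, hB, ⟨e⟩⟩
    exact (Category.assoc _ _ _).trans ((congrArg (i ≫ ·) hr'').symm.trans hir)
  · intro hE n D hsum hD
    obtain ⟨i, r, hir⟩ := hsum
    obtain ⟨B, hB, ⟨e⟩⟩ := hD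
    have hdist := tr.dist (E n)
    set Tn : Triangle C := Triangle.mk (tr.α.app (E n)) (tr.β.app (E n)) (tr.γ (E n))
      with hTn
    -- every map `D ⟶ (τX (E n))⟦1⟧` is zero
    have hzero : ∀ g : D ⟶ (tr.τX.obj (E n))⟦(1 : ℤ)⟧, g = 0 := by
      intro g
      apply aux_serre_zero K d hCY
      intro g'
      have iso2 : (B⟦(-((d : ℤ) - 1))⟧)⟦(d : ℤ)⟧ ≅ B⟦(1 : ℤ)⟧ :=
        (shiftFunctorAdd' C (-((d : ℤ) - 1)) (d : ℤ) (1 : ℤ) (by ring)).symm.app _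
      have hm : g' ≫ (shiftFunctor C (d : ℤ)).map e.hom ≫ iso2.hom = 0 :=
        aux_hom_zero_shift (1 : ℤ)
          (hT.hom_zero (tr.τX.obj (E n)) B (tr.memX (E n)) hB) _
      calc g' = (g' ≫ (shiftFunctor C (d : ℤ)).map e.hom ≫ iso2.hom) ≫ iso2.inv ≫
            (shiftFunctor C (d : ℤ)).map e.inv := by simp
        _ = 0 := by rw [hm]; simp
    have hcond : i ≫ Tn.mor₃ = 0 := hzero _
    obtain ⟨i', hi'⟩ := Triangle.coyoneda_exact₃ _ hdist i hcond
    have hi'' : i = i' ≫ tr.β.app (E n) := hi'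
    refine hE n D ⟨i', tr.β.app (E n) ≫ r, ?_⟩ ⟨B, hB, ⟨e⟩⟩
    exact (Category.assoc _ _ _).symm.trans ((congrArg (· ≫ r) hi'').symm.trans hir)
end

section
/- Let T be a triangulated category with a t-structure (X, Y), S a subcategory of T, and E a sequence in T compactly supported at S, with X-approximation X-seq and Y-approximation Y-seq. Then (i) X-seq is compactly supported at Σ^{-1}X ∩ S; moreover if X ⊆ S then X-seq is a null sequence and mocolim E ≅ mocolim Y-seq; (ii) if T is d-Calabi-Yau for some d > 0, then Y-seq is compactly supported at S ∩ Σ^{-(d-1)}Y. -/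
open CategoryTheory Limits Pretriangulated Opposite

universe v u

variable {C : Type u} [Category.{v} C] [Preadditive C] [HasZeroObject C]
  [HasShift C ℤ] [∀ n : ℤ, (shiftFunctor C n).Additive] [Pretriangulated C]

section ApproxAux

variable {C : Type u} [Category.{v} C] [Preadditive C] [HasZeroObject C]
  [HasShift C ℤ] [∀ n : ℤ, (shiftFunctor C n).Additive] [Pretriangulated C]

namespace ApproxAux

open MetricCompletion

lemma seqMap_refl {E : ℕ → C} (f : ∀ n, E n ⟶ E (n + 1)) {m : ℕ} (h : m ≤ m) :
    seqMap f h = 𝟙 _ := by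
  have : homOfLE h = 𝟙 m := Subsingleton.elim _ _
  rw [seqMap, this]
  exact (Functor.ofSequence f).map_id m

lemma seqMap_succ {E : ℕ → C} (f : ∀ n, E n ⟶ E (n + 1)) {m : ℕ} (h : m ≤ m + 1) :
    seqMap f h = f m := by
  rw [seqMap, show homOfLE h = homOfLE (Nat.le_add_right m 1) from Subsingleton.elim _ _,
    Functor.ofSequence_map_homOfLE_succ]

lemma seqMap_trans {E : ℕ → C} (f : ∀ n, E n ⟶ E (n + 1)) {m m' m'' : ℕ}
    (h1 : m ≤ m') (h2 : m' ≤ m'') :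
    seqMap f (h1.trans h2) = seqMap f h1 ≫ seqMap f h2 := by
  unfold seqMap
  exact (Functor.ofSequence f).map_comp (homOfLE h1) (homOfLE h2)

lemma seqMap_functor {E : ℕ → C} (f : ∀ n, E n ⟶ E (n + 1)) (G : C ⥤ C) {m m' : ℕ}
    (h : m ≤ m') :
    seqMap (fun n => G.map (f n)) h = G.map (seqMap f h) := by
  induction m', h using Nat.le_induction with
  | base => rw [seqMap_refl, seqMap_refl, G.map_id]
  | succ n hmn ih =>
    have e1 : seqMap (fun n => G.map (f n)) (hmn.trans n.le_succ) =
        seqMap (fun n => G.map (f n)) hmn ≫ seqMap (fun n => G.map (f n)) n.le_succ :=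
      seqMap_trans _ hmn n.le_succ
    have e2 : seqMap f (hmn.trans n.le_succ) = seqMap f hmn ≫ seqMap f n.le_succ :=
      seqMap_trans f hmn n.le_succ
    calc seqMap (fun n => G.map (f n)) (hmn.trans n.le_succ)
        = seqMap (fun n => G.map (f n)) hmn ≫ seqMap (fun n => G.map (f n)) n.le_succ := e1
      _ = G.map (seqMap f hmn) ≫ G.map (f n) := by rw [ih, seqMap_succ]
      _ = G.map (seqMap f (hmn.trans n.le_succ)) := by
          rw [e2, seqMap_succ, G.map_comp]

noncomputable instance :
    PreservesFilteredColimitsOfSize.{0, 0} (forget AddCommGrpCat.{v}) :=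
  preservesSmallestFilteredColimits_of_preservesFilteredColimits _

lemma hom_apply_zero {A B : AddCommGrpCat.{v}} (φ : A ⟶ B) : φ (0 : A) = 0 :=
  map_zero φ.hom

/-- The evaluated diagram `n ↦ Hom(Z, E n)`. -/
noncomputable abbrev seqG {E : ℕ → C} (f : ∀ n, E n ⟶ E (n + 1)) (Z : C) :
    ℕ ⥤ AddCommGrpCat.{v} :=
  (Functor.ofSequence f ⋙ preadditiveYoneda) ⋙ (evaluation Cᵒᵖ AddCommGrpCat.{v}).obj (op Z)

lemma seqG_map_apply {E : ℕ → C} (f : ∀ n, E n ⟶ E (n + 1)) (Z : C) {m m' : ℕ}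
    (h : m ≤ m') (g : Z ⟶ E m) :
    (seqG f Z).map (homOfLE h) g = g ≫ seqMap f h := rfl

lemma isZero_mocolim_obj_iff {E : ℕ → C} (f : ∀ n, E n ⟶ E (n + 1)) (Z : C) :
    IsZero ((mocolim f).obj (op Z)) ↔
      ∀ (m : ℕ) (g : Z ⟶ E m), ∃ (m' : ℕ) (h : m ≤ m'), g ≫ seqMap f h = 0 := by
  have e : (mocolim f).obj (op Z) ≅ colimit (seqG f Z) :=
    colimitObjIsoColimitCompEvaluation _ _
  constructor
  · intro hz m g
    have hz' : IsZero (colimit (seqG f Z)) := hz.of_iso e.symm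
    have hall0 : ∀ x : (colimit (seqG f Z) : AddCommGrpCat.{v}), x = 0 := by
      intro x
      have h1 : 𝟙 (colimit (seqG f Z)) = 0 := hz'.eq_of_src _ _
      calc x = (𝟙 (colimit (seqG f Z)) : _ ⟶ _) x := rfl
        _ = (0 : colimit (seqG f Z) ⟶ colimit (seqG f Z)) x := by rw [h1]
        _ = 0 := rfl
    have hall : ∀ x y : (colimit (seqG f Z) : AddCommGrpCat.{v}), x = y := fun x y =>
      (hall0 x).trans (hall0 y).symm
    have heq : colimit.ι (seqG f Z) m g = colimit.ι (seqG f Z) m (0 : Z ⟶ E m) :=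
      hall _ _
    obtain ⟨k, a, b, hab⟩ := Limits.Concrete.colimit_exists_of_rep_eq (seqG f Z) _ _ heq
    refine ⟨k, leOfHom a, ?_⟩
    have : (seqG f Z).map a g = g ≫ seqMap f (leOfHom a) := by
      rw [show a = homOfLE (leOfHom a) from Subsingleton.elim _ _]
      exact seqG_map_apply f Z _ g
    rw [← this, hab]
    exact hom_apply_zero ((seqG f Z).map b)
  · intro hv
    have hall : ∀ x : (colimit (seqG f Z) : AddCommGrpCat.{v}), x = 0 := by
      intro x
      obtain ⟨m, (g : Z ⟶ E m), rfl⟩ := Limits.Concrete.colimit_exists_rep (seqG f Z) x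
      obtain ⟨m', h, hzero⟩ := hv m g
      have := Limits.colimit.w_apply (seqG f Z) (homOfLE h) (x := g)
      rw [← this, seqG_map_apply f Z h g, hzero]
      exact hom_apply_zero (colimit.ι (seqG f Z) m')
    have : Subsingleton ((colimit (seqG f Z) : AddCommGrpCat.{v}) : Type v) :=
      ⟨fun a b => (hall a).trans (hall b).symm⟩
    exact (AddCommGrpCat.isZero_of_subsingleton _).of_iso e

variable {X Y : Set C}

lemma hom_zero_of_shift_iso (hT : TStruct X Y) {Z B W : C} (hW : W ∈ X) (hB : B ∈ Y)
    (c : Z ≅ W) (g : Z ⟶ B) : g = 0 := by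
  have h0 : c.inv ≫ g = 0 := hT.hom_zero _ _ hW hB _
  rw [← Iso.hom_inv_id_assoc c g, h0, comp_zero]

lemma cancel_alpha (tr : Truncation X Y) {Z T : C}
    (hZ : ∀ g : Z⟦(1 : ℤ)⟧ ⟶ tr.τY.obj T, g = 0)
    (u : Z ⟶ tr.τX.obj T) (hu : u ≫ tr.α.app T = 0) : u = 0 := by
  obtain ⟨g, hg⟩ := Triangle.coyoneda_exact₁ _ (tr.dist T) (u⟦(1 : ℤ)⟧')
    (by have := congrArg (shiftFunctor C (1 : ℤ)).map hu; rw [Functor.map_comp, Functor.map_zero] at this; exact this)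
  refine (shiftFunctor C (1 : ℤ)).map_injective ?_
  rw [Functor.map_zero]; refine hg.trans ?_; rw [hZ g]; exact zero_comp

lemma hom_apply_sub {A B : AddCommGrpCat.{v}} (φ : A ⟶ B) (x y : A) :
    φ (x - y) = φ x - φ y :=
  map_sub φ.hom x y

variable {X Y : Set C}

lemma shiftNegOne_hom_zero (hT : TStruct X Y) {Z : C} (hZ : Z ∈ shiftSet X (-1)) {B : C}
    (hB : B ∈ Y) : ∀ g : Z⟦(1 : ℤ)⟧ ⟶ B, g = 0 := by
  obtain ⟨W, hW, ⟨e⟩⟩ := hZ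
  intro g
  have c : Z⟦(1 : ℤ)⟧ ≅ W :=
    (shiftFunctor C (1 : ℤ)).mapIso e ≪≫
      (shiftFunctorCompIsoId C (-1 : ℤ) (1 : ℤ) (by norm_num)).app W
  exact hom_zero_of_shift_iso hT hW hB c g

lemma partI (hT : TStruct X Y) (tr : Truncation X Y) (S : Set C) {E : ℕ → C}
    (f : ∀ n, E n ⟶ E (n + 1)) (hE : CptSuppAt f S) :
    CptSuppAt (fun n => tr.τX.map (f n)) (shiftSet X (-1) ∩ S) := by
  intro Z hZ
  rw [isZero_mocolim_obj_iff]
  intro m g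
  obtain ⟨m', h, h0⟩ := (isZero_mocolim_obj_iff f Z).mp (hE Z hZ.2) m (g ≫ tr.α.app (E m))
  refine ⟨m', h, ?_⟩
  rw [seqMap_functor f tr.τX h]
  have hu : (g ≫ tr.τX.map (seqMap f h)) ≫ tr.α.app (E m') = 0 := by
    rw [Category.assoc, tr.α.naturality (seqMap f h)]
    simp only [Functor.id_map, ← Category.assoc]
    exact h0
  exact cancel_alpha tr (shiftNegOne_hom_zero hT hZ.1 (tr.memY (E m'))) _ hu

lemma partII_null (hT : TStruct X Y) (tr : Truncation X Y) (S : Set C) {E : ℕ → C}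
    (f : ∀ n, E n ⟶ E (n + 1)) (hE : CptSuppAt f S) (hXS : X ⊆ S) :
    IsNullSeq (fun n => tr.τX.map (f n)) := by
  intro m
  obtain ⟨m₀, h₀, hz⟩ := (isZero_mocolim_obj_iff f (tr.τX.obj (E m))).mp
    (hE _ (hXS (tr.memX (E m)))) m (tr.α.app (E m))
  refine ⟨m₀ + 1, Nat.lt_succ_of_le h₀, ?_⟩
  have h1 : m ≤ m₀ + 1 := h₀.trans m₀.le_succ
  have hz1 : tr.α.app (E m) ≫ seqMap f h1 = 0 := by
    rw [show seqMap f h1 = seqMap f h₀ ≫ seqMap f m₀.le_succ from seqMap_trans f h₀ m₀.le_succ,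
      ← Category.assoc, hz, zero_comp]
  have hu : tr.τX.map (seqMap f h1) ≫ tr.α.app (E (m₀ + 1)) = 0 := by
    rw [tr.α.naturality (seqMap f h1)]
    simpa using hz1
  have := cancel_alpha tr
    (fun g' => hT.hom_zero _ _ (hT.shift_mem _ (tr.memX (E m))) (tr.memY _) g') _ hu
  rw [seqMap_functor f tr.τX]
  exact this

lemma cy_vanish (hT : TStruct X Y) {K : Type*} [Field K] [CategoryTheory.Linear K C]
    {d : ℕ} (hd : 0 < d) (hCY : CalabiYau (C := C) K d) {Z W : C} (hW : W ∈ Y)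
    (e : Z ≅ W⟦(-((d : ℤ) - 1))⟧) {A : C} (hA : A ∈ X) (v : Z ⟶ A⟦(1 : ℤ)⟧) : v = 0 := by
  obtain ⟨eq⟩ := hCY Z (A⟦(1 : ℤ)⟧)
  have hzero : ∀ x : A⟦(1 : ℤ)⟧ ⟶ Z⟦(d : ℤ)⟧, x = 0 := by
    intro x
    have c2 : Z⟦(d : ℤ)⟧ ≅ W⟦(1 : ℤ)⟧ :=
      (shiftFunctor C (d : ℤ)).mapIso e ≪≫
        ((shiftFunctorAdd' C (-((d : ℤ) - 1)) (d : ℤ) 1 (by ring)).app W).symm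
    obtain ⟨z, hz⟩ := (shiftFunctor C (1 : ℤ)).map_surjective (x ≫ c2.hom)
    have hz0 : z = 0 := hT.hom_zero _ _ hA hW z
    have hx : x ≫ c2.hom = 0 := by rw [← hz, hz0, Functor.map_zero]
    calc x = (x ≫ c2.hom) ≫ c2.inv := by rw [Category.assoc, c2.hom_inv_id, Category.comp_id]
      _ = 0 := by rw [hx, zero_comp]
  apply eq.injective
  apply LinearMap.ext; intro x
  rw [hzero x]
  simp

lemma partIII (hT : TStruct X Y) (tr : Truncation X Y) (S : Set C) {E : ℕ → C}
    (f : ∀ n, E n ⟶ E (n + 1)) (hE : CptSuppAt f S) {K : Type*} [Field K]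
    [CategoryTheory.Linear K C] {d : ℕ} (hd : 0 < d) (hCY : CalabiYau (C := C) K d) :
    CptSuppAt (fun n => tr.τY.map (f n)) (S ∩ shiftSet Y (-((d : ℤ) - 1))) := by
  intro Z hZ
  rw [isZero_mocolim_obj_iff]
  intro m g
  obtain ⟨W, hW, ⟨e⟩⟩ := hZ.2
  have hγ : g ≫ tr.γ (E m) = 0 := cy_vanish hT hd hCY hW e (tr.memX (E m)) _
  obtain ⟨w, hw⟩ := Triangle.coyoneda_exact₃ _ (tr.dist (E m)) g hγ
  obtain ⟨m', h, h0⟩ := (isZero_mocolim_obj_iff f Z).mp (hE Z hZ.1) m w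
  refine ⟨m', h, ?_⟩
  rw [seqMap_functor f tr.τY h, hw]
  erw [Category.assoc]
  dsimp only [Triangle.mk]
  erw [← tr.β.naturality (seqMap f h)]
  simp only [Functor.id_map, ← Category.assoc]
  erw [← Category.assoc, h0, zero_comp]
lemma partII_iso (tr : Truncation X Y) {E : ℕ → C} (f : ∀ n, E n ⟶ E (n + 1))
    (hnull : IsNullSeq (fun n => tr.τX.map (f n))) :
    Nonempty (mocolim f ≅ mocolim (fun n => tr.τY.map (f n))) := by
  let fY : ∀ n, tr.τY.obj (E n) ⟶ tr.τY.obj (E (n + 1)) := fun n => tr.τY.map (f n)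
  let θ : Functor.ofSequence f ⟶ Functor.ofSequence fY :=
    NatTrans.ofSequence (F := Functor.ofSequence f) (G := Functor.ofSequence fY)
      (fun n => tr.β.app (E n))
      (fun n => by
        rw [Functor.ofSequence_map_homOfLE_succ, Functor.ofSequence_map_homOfLE_succ]
        exact tr.β.naturality (f n))
  let η : Functor.ofSequence f ⋙ preadditiveYoneda ⟶ Functor.ofSequence fY ⋙ preadditiveYoneda :=
    Functor.whiskerRight θ preadditiveYoneda
  let φ : mocolim f ⟶ mocolim fY := colimMap η
  have happ : ∀ Zo : Cᵒᵖ, IsIso (φ.app Zo) := by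
    intro Zo
    obtain ⟨Z⟩ := Zo
    let ev := (evaluation Cᵒᵖ AddCommGrpCat.{v}).obj (op Z)
    let η' : seqG f Z ⟶ seqG fY Z := Functor.whiskerRight η ev
    have happly : ∀ (j : ℕ) (x : Z ⟶ E j),
        (colimMap η') (colimit.ι (seqG f Z) j x) =
          colimit.ι (seqG fY Z) j (x ≫ tr.β.app (E j)) := by
      intro j x
      calc (colimMap η') (colimit.ι (seqG f Z) j x)
          = (colimit.ι (seqG f Z) j ≫ colimMap η') x := (comp_apply _ _ _).symm
        _ = (η'.app j ≫ colimit.ι (seqG fY Z) j) x := by rw [ι_colimMap]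
        _ = colimit.ι (seqG fY Z) j (η'.app j x) := comp_apply _ _ _
        _ = colimit.ι (seqG fY Z) j (x ≫ tr.β.app (E j)) := rfl
    have key : ∀ x : (colimit (seqG f Z) : AddCommGrpCat.{v}), (colimMap η') x = 0 → x = 0 := by
      intro x hx
      obtain ⟨j, (g : Z ⟶ E j), rfl⟩ := Limits.Concrete.colimit_exists_rep (seqG f Z) x
      have h1 : colimit.ι (seqG fY Z) j ((g : Z ⟶ E j) ≫ tr.β.app (E j)) =
          colimit.ι (seqG fY Z) j (0 : Z ⟶ tr.τY.obj (E j)) := by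
        rw [show colimit.ι (seqG fY Z) j (0 : Z ⟶ tr.τY.obj (E j)) = 0 from
          hom_apply_zero _, ← happly j g]
        exact hx
      obtain ⟨k, a, b, hab⟩ := Limits.Concrete.colimit_exists_of_rep_eq (seqG fY Z) _ _ h1
      have hk : ((g : Z ⟶ E j) ≫ tr.β.app (E j)) ≫ seqMap fY (leOfHom a) = 0 := by
        have h2 : (seqG fY Z).map a ((g : Z ⟶ E j) ≫ tr.β.app (E j)) =
            ((g : Z ⟶ E j) ≫ tr.β.app (E j)) ≫ seqMap fY (leOfHom a) := by
          rw [show a = homOfLE (leOfHom a) from Subsingleton.elim _ _]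
          exact seqG_map_apply fY Z _ _
        rw [← h2, hab]
        exact hom_apply_zero ((seqG fY Z).map b)
      have hk2 : ((g : Z ⟶ E j) ≫ seqMap f (leOfHom a)) ≫ tr.β.app (E k) = 0 := by
        have hnat : tr.β.app (E j) ≫ tr.τY.map (seqMap f (leOfHom a)) =
            seqMap f (leOfHom a) ≫ tr.β.app (E k) := (tr.β.naturality _).symm
        have hk' : ((g : Z ⟶ E j) ≫ tr.β.app (E j)) ≫ tr.τY.map (seqMap f (leOfHom a)) = 0 := by
          rw [← seqMap_functor f tr.τY (leOfHom a)]; exact hk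
        rw [Category.assoc, ← hnat, ← Category.assoc]
        exact hk'
      obtain ⟨vv, hv⟩ := Triangle.coyoneda_exact₂ _ (tr.dist (E k))
        ((g : Z ⟶ E j) ≫ seqMap f (leOfHom a)) hk2
      obtain ⟨k', hlt, hz⟩ := hnull k
      have hzz : tr.τX.map (seqMap f hlt.le) = 0 := by
        rw [← seqMap_functor f tr.τX hlt.le]; exact hz
      have hfin : (g : Z ⟶ E j) ≫ seqMap f ((leOfHom a).trans hlt.le) = 0 := by
        have hnat : tr.α.app (E k) ≫ seqMap f hlt.le =
            tr.τX.map (seqMap f hlt.le) ≫ tr.α.app (E k') := (tr.α.naturality _).symm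
        rw [show seqMap f ((leOfHom a).trans hlt.le) =
            seqMap f (leOfHom a) ≫ seqMap f hlt.le from seqMap_trans f _ _,
          ← Category.assoc]
        erw [hv, Category.assoc]
        dsimp only [Triangle.mk]
        rw [hnat, hzz, zero_comp]; exact comp_zero
      have hstep : colimit.ι (seqG f Z) j g =
          colimit.ι (seqG f Z) k' ((g : Z ⟶ E j) ≫ seqMap f ((leOfHom a).trans hlt.le)) := by
        erw [← seqG_map_apply f Z ((leOfHom a).trans hlt.le) g]
        exact (colimit.w_apply (seqG f Z) (homOfLE ((leOfHom a).trans hlt.le)) g).symm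
      erw [hstep, hfin]
      exact hom_apply_zero _
    have hinj : Function.Injective (colimMap η') := by
      intro x y hxy
      have h0 : (colimMap η') (x - y) = 0 := by
        rw [hom_apply_sub, hxy, sub_self]
      have := key _ h0
      exact sub_eq_zero.mp this
    have hsurj : Function.Surjective (colimMap η') := by
      intro y
      obtain ⟨j, (g : Z ⟶ tr.τY.obj (E j)), rfl⟩ := Limits.Concrete.colimit_exists_rep (seqG fY Z) y
      obtain ⟨m', hlt, hz⟩ := hnull j
      have hzz : tr.τX.map (seqMap f hlt.le) = 0 := by
        rw [← seqMap_functor f tr.τX hlt.le]; exact hz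
      have hγ0 : ((g : Z ⟶ tr.τY.obj (E j)) ≫ tr.τY.map (seqMap f hlt.le)) ≫ tr.γ (E m') = 0 := by
        rw [Category.assoc, tr.γ_natural (seqMap f hlt.le), hzz, Functor.map_zero,
          comp_zero, comp_zero]
      obtain ⟨w, hw⟩ := Triangle.coyoneda_exact₃ _ (tr.dist (E m')) _ hγ0
      refine ⟨colimit.ι (seqG f Z) m' w, ?_⟩
      rw [happly m' w]
      have : (w ≫ tr.β.app (E m')) =
          (g : Z ⟶ tr.τY.obj (E j)) ≫ tr.τY.map (seqMap f hlt.le) := by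
        rw [hw]; rfl
      erw [this, ← seqMap_functor f tr.τY hlt.le, ← seqG_map_apply fY Z hlt.le g]
      exact colimit.w_apply (seqG fY Z) (homOfLE hlt.le) g
    have hiso : IsIso (colimMap η') :=
      (ConcreteCategory.isIso_iff_bijective _).mpr ⟨hinj, hsurj⟩
    have comm : (colimitObjIsoColimitCompEvaluation
          (Functor.ofSequence f ⋙ preadditiveYoneda) (op Z)).inv ≫ φ.app (op Z) =
        colimMap η' ≫ (colimitObjIsoColimitCompEvaluation
          (Functor.ofSequence fY ⋙ preadditiveYoneda) (op Z)).inv := by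
      apply colimit.hom_ext
      intro j
      erw [← Category.assoc, colimitObjIsoColimitCompEvaluation_ι_inv, ← Category.assoc,
        ι_colimMap, Category.assoc, colimitObjIsoColimitCompEvaluation_ι_inv]
      show (colimit.ι (Functor.ofSequence f ⋙ preadditiveYoneda) j).app (op Z) ≫
          (colimMap η).app (op Z) = _
      rw [← NatTrans.comp_app, ι_colimMap, NatTrans.comp_app]
      rfl
    have heq : φ.app (op Z) = (colimitObjIsoColimitCompEvaluation
          (Functor.ofSequence f ⋙ preadditiveYoneda) (op Z)).hom ≫ colimMap η' ≫
        (colimitObjIsoColimitCompEvaluation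
          (Functor.ofSequence fY ⋙ preadditiveYoneda) (op Z)).inv := by
      erw [← comm, ← Category.assoc, Iso.hom_inv_id, Category.id_comp]
    rw [heq]
    exact IsIso.comp_isIso' (Iso.isIso_hom _) (IsIso.comp_isIso' hiso (Iso.isIso_inv _))
  have : IsIso φ := NatIso.isIso_of_isIso_app φ
  exact ⟨asIso φ⟩

end ApproxAux

end ApproxAux

open MetricCompletion in
/-- compact supportedness properties of the aisle and coaisle
approximations of a compactly supported sequence. -/
theorem approximation_cptSupp {C : Type u} [Category.{v} C] [Preadditive C]
    [HasZeroObject C] [HasShift C ℤ] [∀ n : ℤ, (shiftFunctor C n).Additive]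
    [Pretriangulated C] (K : Type*) [Field K] [CategoryTheory.Linear K C]
    [∀ A B : C, FiniteDimensional K (A ⟶ B)]
    (X Y : Set C) (hT : TStruct X Y) (tr : Truncation X Y) (S : Set C)
    {E : ℕ → C} (f : ∀ n, E n ⟶ E (n + 1)) (hE : CptSuppAt f S) :
    CptSuppAt (fun n => tr.τX.map (f n)) (shiftSet X (-1) ∩ S) ∧
    (X ⊆ S →
      IsNullSeq (fun n => tr.τX.map (f n)) ∧
      Nonempty (mocolim f ≅ mocolim (fun n => tr.τY.map (f n)))) ∧
    (∀ d : ℕ, 0 < d → CalabiYau (C := C) K d →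
      CptSuppAt (fun n => tr.τY.map (f n)) (S ∩ shiftSet Y (-((d : ℤ) - 1)))) := by
  
  refine ⟨ApproxAux.partI hT tr S f hE, fun hXS => ⟨ApproxAux.partII_null hT tr S f hE hXS,
    ApproxAux.partII_iso tr f (ApproxAux.partII_null hT tr S f hE hXS)⟩,
    fun d hd hCY => ApproxAux.partIII hT tr S f hE hd hCY⟩
end

section
/- Let T be a triangulated category with t-structure (X, Y) and let R be an extension-closed subcategory of T. Let E = (E_n, f_n) be a sequence stabilising at R with X-approximation (X_n, h_n) and Y-approximation (Y_n, g_n). If R ⊆ Y, then the X-approximation stabilises at 0 (its morphisms are eventually isomorphisms), the Y-approximation stabilises at R ∩ ΣY, and for all m' > m sufficiently large there is an isomorphism cone(f_{m,m'}) ≅ cone(g_{m,m'}). -/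
open CategoryTheory Limits Pretriangulated Opposite

universe v u

variable {C : Type u} [Category.{v} C] [Preadditive C] [HasZeroObject C]
  [HasShift C ℤ] [∀ n : ℤ, (shiftFunctor C n).Additive] [Pretriangulated C]

namespace MetricCompletion

section AuxProofs

variable {C : Type u} [Category.{v} C] [Preadditive C] [HasZeroObject C]
  [HasShift C ℤ] [∀ n : ℤ, (shiftFunctor C n).Additive] [Pretriangulated C]

lemma seqMap_comp_functor {D : Type*} [Category D] (F : C ⥤ D) {E : ℕ → C}
    (f : ∀ n, E n ⟶ E (n + 1)) {m m' : ℕ} (h : m ≤ m') :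
    seqMap (fun n => F.map (f n)) h = F.map (seqMap f h) := by
  induction m', h using Nat.le_induction with
  | base =>
      have h1 : homOfLE (le_refl m) = 𝟙 (m : ℕ) := rfl
      simp [seqMap, h1]
      exact (F.map_id _).symm
  | succ k hk ih =>
      have h1 : homOfLE (Nat.le_succ_of_le hk) =
          homOfLE hk ≫ homOfLE (Nat.le_succ k) := (homOfLE_comp hk (Nat.le_succ k)).symm
      simp only [seqMap, h1, Functor.map_comp, Functor.ofSequence_map_homOfLE_succ]
      have h2 := ih
      simp only [seqMap] at h2
      rw [h2]
      exact (F.map_comp _ _).symm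

lemma cone_unique {A B : C} {g : A ⟶ B} {Z₁ Z₂ : C} (h₁ : IsConeOf g Z₁)
    (h₂ : IsConeOf g Z₂) : Nonempty (Z₁ ≅ Z₂) := by
  obtain ⟨a₁, b₁, hd₁⟩ := h₁
  obtain ⟨a₂, b₂, hd₂⟩ := h₂
  obtain ⟨c, hc₁, hc₂⟩ := complete_distinguished_triangle_morphism _ _ hd₁ hd₂
    (𝟙 A) (𝟙 B) (by exact (Category.comp_id g).trans (Category.id_comp g).symm)
  let φ : Triangle.mk g a₁ b₁ ⟶ Triangle.mk g a₂ b₂ :=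
    { hom₁ := 𝟙 A
      hom₂ := 𝟙 B
      hom₃ := c
      comm₁ := (Category.comp_id g).trans (Category.id_comp g).symm
      comm₂ := hc₁
      comm₃ := hc₂ }
  have : IsIso φ.hom₃ := isIso₃_of_isIso₁₂ φ hd₁ hd₂ (by dsimp [φ]; exact IsIso.id A)
    (by dsimp [φ]; exact IsIso.id B)
  exact ⟨@asIso _ _ Z₁ Z₂ φ.hom₃ this⟩

variable {X Y : Set C} (hT : TStruct X Y) (tr : Truncation X Y)

include hT tr in
lemma mem_Y_of_perp {W : C} (h : ∀ x : C, x ∈ X → ∀ f : x ⟶ W, f = 0) : W ∈ Y := by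
  obtain ⟨r, hr⟩ := Triangle.yoneda_exact₂ _ (tr.dist W) (𝟙 W)
    (by rw [show (Triangle.mk (tr.α.app W) (tr.β.app W) (tr.γ W)).mor₁ = 0 from
      h _ (tr.memX W) _]; exact zero_comp)
  exact hT.summand_Y W (tr.τY.obj W) ⟨tr.β.app W, r, hr.symm⟩ (tr.memY W)

include hT tr in
lemma shift_neg_mem_Y {W : C} (hW : W ∈ Y) : W⟦(-1 : ℤ)⟧ ∈ Y := by
  apply mem_Y_of_perp hT tr
  intro x hx f
  have h1 : f⟦(1 : ℤ)⟧' ≫ (shiftFunctorCompIsoId C (-1 : ℤ) (1 : ℤ) (by ring)).hom.app W = 0 :=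
    hT.hom_zero _ _ (hT.shift_mem x hx) hW _
  have h2 : f⟦(1 : ℤ)⟧' = 0 := by
    rw [← cancel_mono ((shiftFunctorCompIsoId C (-1 : ℤ) (1 : ℤ) (by ring)).hom.app W),
      zero_comp]
    exact h1
  apply (shiftFunctor C (1 : ℤ)).map_injective
  rw [h2, Functor.map_zero]

include hT in
lemma isIso_τX_map {A B : C} (φ : A ⟶ B) {Z : C} (a : B ⟶ Z) (b : Z ⟶ A⟦(1 : ℤ)⟧)
    (hdist : Triangle.mk φ a b ∈ distTriang C) (hZ : Z ∈ Y) : IsIso (tr.τX.map φ) := by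
  have hnat : tr.τX.map φ ≫ tr.α.app B = tr.α.app A ≫ φ := by
    simpa using tr.α.naturality φ
  obtain ⟨η, hη⟩ := Triangle.coyoneda_exact₂ _ hdist (tr.α.app B)
    (hT.hom_zero _ _ (tr.memX B) hZ _)
  obtain ⟨s, hs⟩ := Triangle.coyoneda_exact₂ _ (tr.dist A) η
    (hT.hom_zero _ _ (tr.memX B) (tr.memY A) _)
  dsimp at hη hs
  have h1 : (s ≫ tr.τX.map φ - 𝟙 _) ≫ tr.α.app B = 0 := by
    erw [Preadditive.sub_comp, Category.id_comp, Category.assoc, hnat, ← Category.assoc, ← hs,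
      ← hη, sub_self]
  obtain ⟨g, hg⟩ := Triangle.coyoneda_exact₂ _ (inv_rot_of_distTriang _ (tr.dist B)) _ h1
  rw [show g = 0 from hT.hom_zero _ _ (tr.memX B)
    (shift_neg_mem_Y hT tr (tr.memY B)) g, zero_comp] at hg
  have hs1 : s ≫ tr.τX.map φ = 𝟙 _ := by erw [sub_eq_zero] at hg; exact hg
  have he' : (tr.τX.map φ ≫ s - 𝟙 _) ≫ tr.τX.map φ = 0 := by
    erw [Preadditive.sub_comp, Category.id_comp, Category.assoc, hs1, Category.comp_id, sub_self]
  have h2 : ((tr.τX.map φ ≫ s - 𝟙 _) ≫ tr.α.app A) ≫ φ = 0 := by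
    rw [Category.assoc, ← hnat, ← Category.assoc, he', zero_comp]
  obtain ⟨g', hg'⟩ := Triangle.coyoneda_exact₂ _ (inv_rot_of_distTriang _ hdist) _ h2
  rw [show g' = 0 from hT.hom_zero _ _ (tr.memX A) (shift_neg_mem_Y hT tr hZ) g',
    zero_comp] at hg'
  obtain ⟨g'', hg''⟩ := Triangle.coyoneda_exact₂ _ (inv_rot_of_distTriang _ (tr.dist A)) _ hg'
  rw [show g'' = 0 from hT.hom_zero _ _ (tr.memX A)
    (shift_neg_mem_Y hT tr (tr.memY A)) g'', zero_comp] at hg''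
  have hs2 : tr.τX.map φ ≫ s = 𝟙 _ := by erw [sub_eq_zero] at hg''; exact hg''
  exact ⟨s, hs2, hs1⟩

end AuxProofs

end MetricCompletion
namespace MetricCompletion

section AuxProofs2

set_option linter.unusedSectionVars false

variable {C : Type u} [Category.{v} C] [Preadditive C] [HasZeroObject C]
  [HasShift C ℤ] [∀ n : ℤ, (shiftFunctor C n).Additive] [Pretriangulated C]

variable {X Y : Set C} (hT : TStruct X Y) (tr : Truncation X Y)

include hT in
lemma shift_cancel_key {A B : C} (φ : A ⟶ B) {Z : C} (a : B ⟶ Z) (b : Z ⟶ A⟦(1 : ℤ)⟧)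
    (hdist : Triangle.mk φ a b ∈ distTriang C) (hZ : Z ∈ Y)
    {x : C} (hx : x ∈ X) (ψ : x ⟶ (tr.τY.obj A)⟦(1 : ℤ)⟧)
    (hψ : ψ ≫ (tr.τY.map φ)⟦(1 : ℤ)⟧' = 0) : ψ = 0 := by
  have hXiso : IsIso (tr.τX.map φ) := isIso_τX_map hT tr φ a b hdist hZ
  have hβnat : φ ≫ tr.β.app B = tr.β.app A ≫ tr.τY.map φ := by
    simpa using tr.β.naturality φ
  have hnat : tr.τX.map φ ≫ tr.α.app B = tr.α.app A ≫ φ := by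
    simpa using tr.α.naturality φ
  have hSA := rot_of_distTriang _ (rot_of_distTriang _ (rot_of_distTriang _ (tr.dist A)))
  have hSB := rot_of_distTriang _ (rot_of_distTriang _ (rot_of_distTriang _ (tr.dist B)))
  have hT2 := rot_of_distTriang _ (rot_of_distTriang _ hdist)
  -- step 1
  have h1 : ψ ≫ (tr.γ A)⟦(1 : ℤ)⟧' = 0 := by
    rw [← cancel_mono (((tr.τX.map φ)⟦(1 : ℤ)⟧')⟦(1 : ℤ)⟧'), zero_comp, Category.assoc,
      ← Functor.map_comp, ← tr.γ_natural φ, Functor.map_comp, ← Category.assoc, hψ, zero_comp]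
  obtain ⟨ψ', hψ'⟩ := Triangle.coyoneda_exact₃ _ hSA ψ
    (by exact (Preadditive.comp_neg ψ _).trans ((congrArg Neg.neg h1).trans neg_zero))
  dsimp [Triangle.rotate] at hψ'
  have hψ₂ : ∃ ψ₂ : x ⟶ A⟦(1 : ℤ)⟧, ψ = ψ₂ ≫ (tr.β.app A)⟦(1 : ℤ)⟧' :=
    ⟨-ψ', hψ'.trans ((Preadditive.comp_neg ψ' ((tr.β.app A)⟦(1 : ℤ)⟧')).trans
      (Preadditive.neg_comp ψ' _).symm)⟩
  obtain ⟨ψ₂, hψ₂⟩ := hψ₂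
  have h3 : (ψ₂ ≫ φ⟦(1 : ℤ)⟧') ≫ (tr.β.app B)⟦(1 : ℤ)⟧' = 0 := by
    rw [Category.assoc, ← Functor.map_comp, hβnat, Functor.map_comp, ← Category.assoc,
      ← hψ₂, hψ]
  obtain ⟨χ, hχ⟩ := Triangle.coyoneda_exact₂ _ hSB (ψ₂ ≫ φ⟦(1 : ℤ)⟧')
    (by exact (Preadditive.comp_neg _ _).trans ((congrArg Neg.neg h3).trans neg_zero))
  dsimp [Triangle.rotate] at hχ
  have hχ₂ : ∃ χ₂ : x ⟶ (tr.τX.obj B)⟦(1 : ℤ)⟧,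
      ψ₂ ≫ φ⟦(1 : ℤ)⟧' = -(χ₂ ≫ (tr.α.app B)⟦(1 : ℤ)⟧') :=
    ⟨χ, hχ.trans (Preadditive.comp_neg χ ((tr.α.app B)⟦(1 : ℤ)⟧'))⟩
  obtain ⟨χ₂, hχ₂⟩ := hχ₂
  obtain ⟨uα, huα⟩ : ∃ u : (tr.τX.obj A)⟦(1 : ℤ)⟧ ⟶ A⟦(1 : ℤ)⟧,
      u = (tr.α.app A)⟦(1 : ℤ)⟧' := ⟨(tr.α.app A)⟦(1 : ℤ)⟧', rfl⟩
  have hf : (ψ₂ + (χ₂ ≫ inv ((tr.τX.map φ)⟦(1 : ℤ)⟧')) ≫ uα) ≫ φ⟦(1 : ℤ)⟧' = 0 := by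
    have e1 : (χ₂ ≫ inv ((tr.τX.map φ)⟦(1 : ℤ)⟧')) ≫ uα ≫ φ⟦(1 : ℤ)⟧'
        = χ₂ ≫ (tr.α.app B)⟦(1 : ℤ)⟧' := by
      rw [huα, ← Functor.map_comp, ← hnat, Functor.map_comp, Category.assoc,
        IsIso.inv_hom_id_assoc]
    rw [Preadditive.add_comp, hχ₂, Category.assoc, e1, neg_add_cancel]
  obtain ⟨g, hg⟩ := Triangle.coyoneda_exact₂ _ hT2
    (ψ₂ + (χ₂ ≫ inv ((tr.τX.map φ)⟦(1 : ℤ)⟧')) ≫ uα)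
    (by exact (Preadditive.comp_neg _ _).trans ((congrArg Neg.neg hf).trans neg_zero))
  dsimp [Triangle.rotate] at hg
  erw [show g = 0 from hT.hom_zero _ _ hx hZ g, zero_comp] at hg
  have hαβ : tr.α.app A ≫ tr.β.app A = 0 := comp_distTriang_mor_zero₁₂ _ (tr.dist A)
  have hneg : ψ₂ = -((χ₂ ≫ inv ((tr.τX.map φ)⟦(1 : ℤ)⟧')) ≫ uα) := by
    rw [← sub_eq_zero, sub_neg_eq_add]
    exact hg
  rw [hψ₂, hneg, huα]
  simp only [Preadditive.neg_comp, Category.assoc, ← Functor.map_comp, hαβ,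
    Functor.map_zero, comp_zero, neg_zero]

include hT in
lemma isConeOf_τY_map {A B : C} (φ : A ⟶ B) {Z : C} (hZ : Z ∈ Y)
    (hcone : IsConeOf φ Z) : IsConeOf (tr.τY.map φ) Z := by
  obtain ⟨a, b, hdist⟩ := hcone
  obtain ⟨Z', p, q, hdist'⟩ := Pretriangulated.distinguished_cocone_triangle (tr.τY.map φ)
  have hβnat : φ ≫ tr.β.app B = tr.β.app A ≫ tr.τY.map φ := by
    simpa using tr.β.naturality φ
  obtain ⟨w0, hw₁0, hw₂0⟩ := complete_distinguished_triangle_morphism (Triangle.mk φ a b)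
    (Triangle.mk (tr.τY.map φ) p q) hdist hdist' (tr.β.app A) (tr.β.app B) hβnat
  have hw : ∃ w : Z ⟶ Z', a ≫ w = tr.β.app B ≫ p ∧ b ≫ (tr.β.app A)⟦(1 : ℤ)⟧' = w ≫ q :=
    ⟨w0, hw₁0, hw₂0⟩
  obtain ⟨w, hw₁, hw₂⟩ := hw
  have hSA := rot_of_distTriang _ (rot_of_distTriang _ (rot_of_distTriang _ (tr.dist A)))
  have hSB := rot_of_distTriang _ (rot_of_distTriang _ (rot_of_distTriang _ (tr.dist B)))
  have hZ'Y : Z' ∈ Y := by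
    apply mem_Y_of_perp hT tr
    intro x hx ρ
    have h1 : (ρ ≫ q) ≫ (tr.τY.map φ)⟦(1 : ℤ)⟧' = 0 := by
      have h0 : q ≫ (tr.τY.map φ)⟦(1 : ℤ)⟧' = 0 := comp_distTriang_mor_zero₃₁ _ hdist'
      rw [Category.assoc, h0, comp_zero]
    have h2 : ρ ≫ q = 0 := shift_cancel_key hT tr φ a b hdist hZ hx _ h1
    obtain ⟨σ, hσ⟩ := Triangle.coyoneda_exact₃ _ hdist' ρ h2
    rw [hσ, show σ = 0 from hT.hom_zero _ _ hx (tr.memY B) σ]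
    exact zero_comp
  obtain ⟨a'', ha''⟩ : ∃ a'' : tr.τY.obj B ⟶ Z, a = tr.β.app B ≫ a'' :=
    Triangle.yoneda_exact₂ _ (tr.dist B) a (hT.hom_zero _ _ (tr.memX B) hZ _)
  have hu : tr.τY.map φ ≫ a'' = 0 := by
    have hφa : φ ≫ a = 0 := comp_distTriang_mor_zero₁₂ _ hdist
    have h1 : tr.β.app A ≫ (tr.τY.map φ ≫ a'') = 0 := by
      rw [← Category.assoc, ← hβnat, Category.assoc, ← ha'', hφa]
    obtain ⟨g, hg⟩ : ∃ g : (tr.τX.obj A)⟦(1 : ℤ)⟧ ⟶ Z, tr.τY.map φ ≫ a'' = tr.γ A ≫ g :=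
      Triangle.yoneda_exact₃ _ (tr.dist A) _ h1
    rw [hg, show g = 0 from hT.hom_zero _ _ (hT.shift_mem _ (tr.memX A)) hZ g, comp_zero]
  obtain ⟨v0, hv0⟩ := Triangle.yoneda_exact₂ _ hdist' a'' hu
  have hv : ∃ v : Z' ⟶ Z, a'' = p ≫ v := ⟨v0, hv0⟩
  obtain ⟨v, hv⟩ := hv
  have he : a ≫ (w ≫ v - 𝟙 Z) = 0 := by
    rw [Preadditive.comp_sub, Category.comp_id, ← Category.assoc, hw₁, Category.assoc,
      ← hv, ← ha'', sub_self]
  obtain ⟨g1, hg1⟩ : ∃ g1 : A⟦(1 : ℤ)⟧ ⟶ Z, w ≫ v - 𝟙 Z = b ≫ g1 :=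
    Triangle.yoneda_exact₃ _ hdist _ he
  obtain ⟨g20, hg20⟩ : ∃ g20 : (tr.τY.obj A)⟦(1 : ℤ)⟧ ⟶ Z,
      g1 = (-((tr.β.app A)⟦(1 : ℤ)⟧')) ≫ g20 := Triangle.yoneda_exact₂ _ hSA g1
    (by exact (Preadditive.neg_comp _ _).trans ((congrArg Neg.neg
          (show (tr.α.app A)⟦(1 : ℤ)⟧' ≫ g1 = 0 from
          hT.hom_zero _ _ (hT.shift_mem _ (tr.memX A)) hZ _)).trans neg_zero))
  have hg2 : ∃ g2 : (tr.τY.obj A)⟦(1 : ℤ)⟧ ⟶ Z, g1 = -((tr.β.app A)⟦(1 : ℤ)⟧' ≫ g2) :=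
    ⟨g20, by rw [hg20, Preadditive.neg_comp]⟩
  obtain ⟨g2, hg2⟩ := hg2
  have hwv : w ≫ (v + q ≫ g2) = 𝟙 Z := by
    have e1 : w ≫ (q ≫ g2) = b ≫ (tr.β.app A)⟦(1 : ℤ)⟧' ≫ g2 := by
      rw [← Category.assoc, ← hw₂, Category.assoc]
    have e2 : w ≫ v - 𝟙 Z = -(b ≫ (tr.β.app A)⟦(1 : ℤ)⟧' ≫ g2) := by
      rw [hg1, hg2, Preadditive.comp_neg]
    rw [Preadditive.comp_add, e1]
    rw [sub_eq_iff_eq_add] at e2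
    rw [e2]
    abel
  set v₂ : Z' ⟶ Z := v + q ≫ g2 with hv₂
  have hκw : w ≫ (v₂ ≫ w - 𝟙 Z') = 0 := by
    rw [Preadditive.comp_sub, Category.comp_id, ← Category.assoc, hwv, Category.id_comp,
      sub_self]
  have hpκ : p ≫ (v₂ ≫ w - 𝟙 Z') = 0 := by
    have hb : tr.β.app B ≫ (p ≫ (v₂ ≫ w - 𝟙 Z')) = 0 := by
      rw [← Category.assoc, ← hw₁, Category.assoc, hκw, comp_zero]
    obtain ⟨g3, hg3⟩ : ∃ g3 : (tr.τX.obj B)⟦(1 : ℤ)⟧ ⟶ Z',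
        p ≫ (v₂ ≫ w - 𝟙 Z') = tr.γ B ≫ g3 := Triangle.yoneda_exact₃ _ (tr.dist B) _ hb
    rw [hg3, show g3 = 0 from hT.hom_zero _ _ (hT.shift_mem _ (tr.memX B)) hZ'Y g3,
      comp_zero]
  obtain ⟨lam0, hlam0⟩ : ∃ lam0 : (tr.τY.obj A)⟦(1 : ℤ)⟧ ⟶ Z', v₂ ≫ w - 𝟙 Z' = q ≫ lam0 :=
    Triangle.yoneda_exact₃ _ hdist' _ hpκ
  have hlam' : ∃ lam : (tr.τY.obj A)⟦(1 : ℤ)⟧ ⟶ Z', v₂ ≫ w - 𝟙 Z' = q ≫ lam := ⟨lam0, hlam0⟩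
  obtain ⟨lam, hlam⟩ := hlam'
  have hblam : b ≫ ((tr.β.app A)⟦(1 : ℤ)⟧' ≫ lam) = 0 := by
    rw [← Category.assoc, hw₂, Category.assoc, ← hlam, hκw]
  obtain ⟨μ0, hμ0⟩ : ∃ μ0 : B⟦(1 : ℤ)⟧ ⟶ Z',
      (tr.β.app A)⟦(1 : ℤ)⟧' ≫ lam = (-(φ⟦(1 : ℤ)⟧')) ≫ μ0 :=
    Triangle.yoneda_exact₃ _ (rot_of_distTriang _ hdist) _ hblam
  have hμ' : ∃ μ : B⟦(1 : ℤ)⟧ ⟶ Z',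
      (tr.β.app A)⟦(1 : ℤ)⟧' ≫ lam = -(φ⟦(1 : ℤ)⟧' ≫ μ) := ⟨μ0, by
        rw [hμ0, Preadditive.neg_comp]⟩
  obtain ⟨μ, hμ⟩ := hμ'
  obtain ⟨μ₂0, hμ₂0⟩ : ∃ μ₂0 : (tr.τY.obj B)⟦(1 : ℤ)⟧ ⟶ Z',
      μ = (-((tr.β.app B)⟦(1 : ℤ)⟧')) ≫ μ₂0 := Triangle.yoneda_exact₂ _ hSB μ
    (by exact (Preadditive.neg_comp _ _).trans ((congrArg Neg.neg
          (show (tr.α.app B)⟦(1 : ℤ)⟧' ≫ μ = 0 from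
          hT.hom_zero _ _ (hT.shift_mem _ (tr.memX B)) hZ'Y _)).trans neg_zero))
  have hμ₂' : ∃ μ₂ : (tr.τY.obj B)⟦(1 : ℤ)⟧ ⟶ Z', μ = -((tr.β.app B)⟦(1 : ℤ)⟧' ≫ μ₂) :=
    ⟨μ₂0, by rw [hμ₂0, Preadditive.neg_comp]⟩
  obtain ⟨μ₂, hμ₂⟩ := hμ₂'
  have hδ : (tr.β.app A)⟦(1 : ℤ)⟧' ≫ (lam - (tr.τY.map φ)⟦(1 : ℤ)⟧' ≫ μ₂) = 0 := by
    have e3 : (tr.β.app A)⟦(1 : ℤ)⟧' ≫ lam = (tr.β.app A)⟦(1 : ℤ)⟧' ≫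
        (tr.τY.map φ)⟦(1 : ℤ)⟧' ≫ μ₂ := by
      rw [hμ, hμ₂, Preadditive.comp_neg, neg_neg, ← Category.assoc, ← Functor.map_comp,
        hβnat, Functor.map_comp, Category.assoc]
    rw [Preadditive.comp_sub, e3, sub_self]
  obtain ⟨ν, hν⟩ : ∃ ν : ((tr.τX.obj A)⟦(1 : ℤ)⟧)⟦(1 : ℤ)⟧ ⟶ Z',
      lam - (tr.τY.map φ)⟦(1 : ℤ)⟧' ≫ μ₂ = (-((tr.γ A)⟦(1 : ℤ)⟧')) ≫ ν :=
    Triangle.yoneda_exact₃ _ hSA _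
    (by exact (Preadditive.neg_comp _ _).trans ((congrArg Neg.neg hδ).trans neg_zero))
  rw [show ν = 0 from hT.hom_zero _ _ (hT.shift_mem _ (hT.shift_mem _ (tr.memX A))) hZ'Y ν,
    comp_zero] at hν
  have hlam2 : lam = (tr.τY.map φ)⟦(1 : ℤ)⟧' ≫ μ₂ := by rwa [sub_eq_zero] at hν
  have hq0 : q ≫ (tr.τY.map φ)⟦(1 : ℤ)⟧' = 0 := comp_distTriang_mor_zero₃₁ _ hdist'
  have hvw : v₂ ≫ w = 𝟙 Z' := by
    have h5 : v₂ ≫ w - 𝟙 Z' = 0 := by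
      rw [hlam, hlam2, ← Category.assoc, hq0, zero_comp]
    rwa [sub_eq_zero] at h5
  haveI : IsIso w := ⟨v₂, hwv, hvw⟩
  refine ⟨p ≫ inv w, w ≫ q, isomorphic_distinguished _ hdist' _ ?_⟩
  exact Triangle.isoMk _ _ (Iso.refl _) (Iso.refl _) (@asIso _ _ _ _ w this)
    (by exact (Category.comp_id _).trans (Category.id_comp _).symm)
    (by exact (Category.assoc p (inv w) w).trans ((congrArg (fun t => p ≫ t)
      (IsIso.inv_hom_id w)).trans ((Category.comp_id p).trans (Category.id_comp p).symm)))
    (by exact (congrArg (fun t => (w ≫ q) ≫ t) ((shiftFunctor C (1 : ℤ)).map_id _)).trans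
          (Category.comp_id _))

end AuxProofs2

end MetricCompletion
open MetricCompletion in
/-- if a sequence stabilises at an extension-closed `R ⊆ Y`, then its
aisle approximation stabilises at `0`, its coaisle approximation stabilises at
`R ∩ ΣY`, and eventually the cones of the sequence and of its coaisle approximation
are isomorphic. -/
theorem approximation_stabilises {C : Type u} [Category.{v} C] [Preadditive C]
    [HasZeroObject C] [HasShift C ℤ] [∀ n : ℤ, (shiftFunctor C n).Additive]
    [Pretriangulated C] (X Y : Set C) (hT : TStruct X Y) (tr : Truncation X Y)
    (R : Set C) (hRext : ExtClosed R) {E : ℕ → C} (f : ∀ n, E n ⟶ E (n + 1))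
    (hE : StabilisesAt f R) (hRY : R ⊆ Y) :
    StabilisesAt (fun n => tr.τX.map (f n)) {A : C | IsZero A} ∧
    StabilisesAt (fun n => tr.τY.map (f n)) (R ∩ shiftSet Y 1) ∧
    ∃ N : ℕ, ∀ m m' : ℕ, ∀ h : m < m', N ≤ m →
      ∀ Cf Cg : C, IsConeOf (seqMap f h.le) Cf →
        IsConeOf (seqMap (fun n => tr.τY.map (f n)) h.le) Cg →
        Nonempty (Cf ≅ Cg) := by
  obtain ⟨N, hN⟩ := hE
  refine ⟨⟨N, fun m m' h hm => ?_⟩, ⟨N, fun m m' h hm => ?_⟩, N, fun m m' h hm => ?_⟩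
  · -- aisle approximation has zero cones
    obtain ⟨Z, ⟨a, b, hd⟩, hZR⟩ := hN m m' h hm
    have hiso : IsIso (tr.τX.map (seqMap f h.le)) :=
      isIso_τX_map hT tr _ a b hd (hRY hZR)
    obtain ⟨W, p, q, hW⟩ :=
      Pretriangulated.distinguished_cocone_triangle (tr.τX.map (seqMap f h.le))
    refine ⟨W, ?_, ?_⟩
    · rw [show seqMap (fun n => tr.τX.map (f n)) h.le = tr.τX.map (seqMap f h.le) from
        seqMap_comp_functor tr.τX f h.le]
      exact ⟨p, q, hW⟩
    · exact Pretriangulated.Triangle.isZero₃_of_isIso₁ _ hW hiso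
  · -- coaisle approximation
    obtain ⟨Z, hZcone, hZR⟩ := hN m m' h hm
    have hZY : Z ∈ Y := hRY hZR
    have hcone' : IsConeOf (tr.τY.map (seqMap f h.le)) Z :=
      isConeOf_τY_map hT tr _ hZY hZcone
    refine ⟨Z, ?_, hZR, ?_⟩
    · rw [show seqMap (fun n => tr.τY.map (f n)) h.le = tr.τY.map (seqMap f h.le) from
        seqMap_comp_functor tr.τY f h.le]
      exact hcone'
    · -- Z ∈ shiftSet Y 1
      refine ⟨Z⟦(-1 : ℤ)⟧, shift_neg_mem_Y hT tr hZY,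
        ⟨((shiftFunctorCompIsoId C (-1 : ℤ) (1 : ℤ) (by ring)).app Z).symm⟩⟩
  · -- cones agree
    intro Cf Cg hCf hCg
    obtain ⟨Z, hZcone, hZR⟩ := hN m m' h hm
    obtain ⟨e⟩ := cone_unique hCf hZcone
    have hCfY : Cf ∈ Y := hT.summand_Y Cf Z ⟨e.hom, e.inv, e.hom_inv_id⟩ (hRY hZR)
    have hCf' : IsConeOf (tr.τY.map (seqMap f h.le)) Cf :=
      isConeOf_τY_map hT tr _ hCfY hCf
    rw [show seqMap (fun n => tr.τY.map (f n)) h.le = tr.τY.map (seqMap f h.le) from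
      seqMap_comp_functor tr.τY f h.le] at hCg
    exact cone_unique hCf' hCg
end

section
/- Let (X, Y) be a t-structure on a triangulated category T and consider the aisle metric M_X given by (M_X)_t = Σ^t X for t > 0. Then the completion S_{M_X} of T with respect to M_X (the full subcategory of Mod T consisting of module colimits of Cauchy sequences which are compactly supported with respect to M_X) is equivalent to add(⋃_{p∈ℤ} Σ^p Y). In particular it is equivalent to a thick subcategory of T. -/
open CategoryTheory Limits Pretriangulated Opposite

universe v u

variable {C : Type u} [Category.{v} C] [Preadditive C] [HasZeroObject C]
  [HasShift C ℤ] [∀ n : ℤ, (shiftFunctor C n).Additive] [Pretriangulated C]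

namespace MetricCompletion

/-- The additive closure `add S`: summands of finite direct sums of objects of `S`. -/
def addClosure [HasFiniteBiproducts C] (S : Set C) : Set C :=
  {A | ∃ (n : ℕ) (g : Fin n → C), (∀ i, g i ∈ S) ∧ IsSummand A (⨁ g)}

/-- The completion `𝔖_M` of `T` with respect to a metric `M = {B_t}`: module colimits in
`Mod T` of Cauchy sequences which are compactly supported with respect to `M`. -/
def completionSet (B : ℕ → Set C) : Set (Cᵒᵖ ⥤ AddCommGrpCat.{v}) :=
  {F | ∃ (E : ℕ → C) (f : ∀ n, E n ⟶ E (n + 1)),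
    CauchyWrt B f ∧ CptSuppWrt B f ∧ Nonempty (F ≅ mocolim f)}

end MetricCompletion

namespace MetricCompletion

open ZeroObject

set_option linter.unusedSectionVars false

variable {C : Type u} [Category.{v} C] [Preadditive C] [HasZeroObject C]
  [HasShift C ℤ] [∀ n : ℤ, (shiftFunctor C n).Additive] [Pretriangulated C]

/-! ### `seqMap` basics -/

lemma seqMap_refl' {E : ℕ → C} (f : ∀ n, E n ⟶ E (n + 1)) {m : ℕ} (h : m ≤ m) :
    seqMap f h = 𝟙 (E m) := by
  have : homOfLE h = 𝟙 m := rfl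
  rw [seqMap, this, CategoryTheory.Functor.map_id]; rfl

lemma seqMap_trans' {E : ℕ → C} (f : ∀ n, E n ⟶ E (n + 1)) {m m' m'' : ℕ}
    (h1 : m ≤ m') (h2 : m' ≤ m'') (h : m ≤ m'') :
    seqMap f h = seqMap f h1 ≫ seqMap f h2 := by
  have : homOfLE h = homOfLE h1 ≫ homOfLE h2 := Subsingleton.elim _ _
  rw [seqMap, this, Functor.map_comp]; rfl

lemma seqMap_succ' {E : ℕ → C} (f : ∀ n, E n ⟶ E (n + 1)) {n : ℕ} (h : n ≤ n + 1) :
    seqMap f h = f n := by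
  have : homOfLE h = homOfLE (Nat.le_succ n) := Subsingleton.elim _ _
  rw [seqMap, this]
  exact Functor.ofSequence_map_homOfLE_succ f n

lemma seqMap_const_id (A : C) {m n : ℕ} (h : m ≤ n) :
    seqMap (fun _ => 𝟙 A) h = 𝟙 A := by
  induction n, h using Nat.le_induction with
  | base => exact seqMap_refl' _ le_rfl
  | succ n hmn ih =>
      rw [seqMap_trans' _ hmn (Nat.le_succ n), seqMap_succ', ih, Category.comp_id]

lemma seqMap_comp_fixed {E : ℕ → C} (f : ∀ n, E n ⟶ E (n + 1)) {A : C}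
    (g : ∀ n, E n ⟶ A) (hg : ∀ n, f n ≫ g (n + 1) = g n)
    {m n : ℕ} (h : m ≤ n) : seqMap f h ≫ g n = g m := by
  induction n, h using Nat.le_induction with
  | base => rw [seqMap_refl', Category.id_comp]
  | succ n hmn ih =>
      rw [seqMap_trans' f hmn (Nat.le_succ n), seqMap_succ', Category.assoc, hg, ih]

end MetricCompletion
namespace MetricCompletion

open ZeroObject

set_option linter.unusedSectionVars false

variable {C : Type u} [Category.{v} C] [Preadditive C] [HasZeroObject C]
  [HasShift C ℤ] [∀ n : ℤ, (shiftFunctor C n).Additive] [Pretriangulated C]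

section TStructLemmas

variable {X Y : Set C} (hT : TStruct X Y)
include hT

lemma mem_X_of_iso {A B : C} (e : A ≅ B) (hB : B ∈ X) : A ∈ X :=
  hT.summand_X A B ⟨e.hom, e.inv, e.hom_inv_id⟩ hB

lemma shift_mem_nat (k : ℤ) (hk : 0 ≤ k) {A : C} (hA : A ∈ X) : A⟦k⟧ ∈ X := by
  refine Int.le_induction (motive := fun k _ => A⟦k⟧ ∈ X) ?_ ?_ k hk
  · exact mem_X_of_iso hT ((shiftFunctorZero C ℤ).app A) hA
  · intro n _ ih
    exact mem_X_of_iso hT ((shiftFunctorAdd' C n 1 (n + 1) rfl).app A)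
      (hT.shift_mem _ ih)

lemma zero_mem_X : (0 : C) ∈ X := by
  obtain ⟨A, B, a, b, c, hA, hB, hdist⟩ := hT.exists_triangle (0 : C)
  exact hT.summand_X 0 A ⟨0, 0, (isZero_zero C).eq_of_src _ _⟩ hA

end TStructLemmas

section ShiftSet

lemma mem_shiftSet_of_mem {S : Set C} {A : C} (h : A ∈ S) (n : ℤ) :
    A⟦n⟧ ∈ shiftSet S n :=
  ⟨A, h, ⟨Iso.refl _⟩⟩

lemma shiftSet_iso_closed {S : Set C} {n : ℤ} {A B : C} (e : A ≅ B)
    (h : B ∈ shiftSet S n) : A ∈ shiftSet S n := by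
  obtain ⟨x, hx, ⟨e'⟩⟩ := h
  exact ⟨x, hx, ⟨e ≪≫ e'⟩⟩

lemma shiftSet_shift {S : Set C} {A : C} {s : ℤ} (h : A ∈ shiftSet S s)
    (r t : ℤ) (hrt : s + r = t) : A⟦r⟧ ∈ shiftSet S t := by
  obtain ⟨B, hB, ⟨e⟩⟩ := h
  exact ⟨B, hB, ⟨(shiftFunctor C r).mapIso e ≪≫ ((shiftFunctorAdd' C s r t hrt).app B).symm⟩⟩

end ShiftSet

section HomZero

variable {X Y : Set C} (hT : TStruct X Y)
include hT

lemma hom_zero_shift {s p : ℤ} (hps : p ≤ s) {a b : C}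
    (ha : a ∈ shiftSet X s) (hb : b ∈ shiftSet Y p) (φ : a ⟶ b) : φ = 0 := by
  obtain ⟨x, hx, ⟨e⟩⟩ := ha
  obtain ⟨y, hy, ⟨e'⟩⟩ := hb
  have key : e.inv ≫ φ ≫ e'.hom = 0 := by
    apply (shiftFunctor C (-p)).map_injective
    rw [Functor.map_zero]
    set ψ := (shiftFunctor C (-p)).map (e.inv ≫ φ ≫ e'.hom) with hψ
    let u := (shiftFunctorAdd' C s (-p) (s - p) (by ring)).app x
    let w := (shiftFunctorCompIsoId C p (-p) (by ring)).app y
    have hχ : u.hom ≫ ψ ≫ w.hom = 0 :=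
      hT.hom_zero _ _ (shift_mem_nat hT (s - p) (by omega) hx) hy _
    calc ψ = u.inv ≫ (u.hom ≫ ψ ≫ w.hom) ≫ w.inv := by simp
    _ = 0 := by rw [hχ, zero_comp, comp_zero]
  calc φ = e.hom ≫ (e.inv ≫ φ ≫ e'.hom) ≫ e'.inv := by simp
  _ = 0 := by rw [key, zero_comp, comp_zero]

end HomZero

section AisleMetric

variable {X Y : Set C} (hT : TStruct X Y)

lemma aisleMetric_eq_shiftSet (X : Set C) (t : ℕ) (ht : 1 ≤ t) :
    aisleMetric X t = shiftSet X (t : ℤ) := by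
  obtain ⟨s, rfl⟩ : ∃ s, t = s + 1 := ⟨t - 1, by omega⟩
  show shiftSet X _ = shiftSet X _
  congr 1 <;> omega

include hT in
lemma zero_mem_aisleMetric (t : ℕ) {Z : C} (hZ : IsZero Z) :
    Z ∈ aisleMetric X t := by
  cases t with
  | zero => trivial
  | succ t =>
      refine ⟨0, zero_mem_X hT, ⟨hZ.iso ?_⟩⟩
      exact (shiftFunctor C ((t : ℤ) + 1)).map_isZero (isZero_zero C)

include hT in
lemma aisleMetric_antitone (t : ℕ) : aisleMetric X (t + 1) ⊆ aisleMetric X t := by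
  cases t with
  | zero => intro A _; trivial
  | succ t =>
      rintro A ⟨x, hx, ⟨e⟩⟩
      refine ⟨x⟦(1 : ℤ)⟧, hT.shift_mem x hx,
        ⟨e ≪≫ (shiftFunctorAdd' C 1 ((t : ℤ) + 1) (((t : ℕ) + 1 : ℕ) + 1) (by push_cast; ring)).app x⟩⟩

include hT in
lemma aisleMetric_mono {t t' : ℕ} (h : t ≤ t') :
    aisleMetric X t' ⊆ aisleMetric X t := by
  induction t', h using Nat.le_induction with
  | base => exact fun _ h => h
  | succ t' ht ih => exact fun A hA => ih (aisleMetric_antitone hT t' hA)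

end AisleMetric

section Approx

variable {X Y : Set C} (hT : TStruct X Y)
include hT

lemma exists_approx_triangle (t : ℤ) (T₀ : C) :
    ∃ (a b : C) (ι : a ⟶ T₀) (π : T₀ ⟶ b) (δ : b ⟶ a⟦(1 : ℤ)⟧),
      a ∈ shiftSet X t ∧ b ∈ shiftSet Y t ∧ Triangle.mk ι π δ ∈ distTriang C := by
  obtain ⟨A, B, a0, b0, c0, hA, hB, hdist⟩ := hT.exists_triangle (T₀⟦-t⟧)
  have hshift := Triangle.shift_distinguished _ hdist t
  set T' := (CategoryTheory.shiftFunctor (Triangle C) t).obj (Triangle.mk a0 b0 c0) with hT'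
  let e : ((T₀⟦-t⟧)⟦t⟧ : C) ≅ T₀ := (shiftFunctorCompIsoId C (-t) t (by ring)).app T₀
  refine ⟨A⟦t⟧, B⟦t⟧, T'.mor₁ ≫ e.hom, e.inv ≫ T'.mor₂, T'.mor₃,
    mem_shiftSet_of_mem hA t, mem_shiftSet_of_mem hB t, ?_⟩
  refine isomorphic_distinguished _ hshift _ ?_
  exact Triangle.isoMk _ _ (Iso.refl _) e.symm (Iso.refl _)
    (by change (T'.mor₁ ≫ e.hom) ≫ e.inv = 𝟙 _ ≫ T'.mor₁; simp; erw [Category.assoc, e.hom_inv_id, Category.comp_id])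
    (by change (e.inv ≫ T'.mor₂) ≫ 𝟙 _ = e.inv ≫ T'.mor₂; simp)
    (by change T'.mor₃ ≫ (shiftFunctor C 1).map (𝟙 _) = 𝟙 _ ≫ T'.mor₃; simp)

end Approx

end MetricCompletion
namespace MetricCompletion

open ZeroObject

set_option linter.unusedSectionVars false

variable {C : Type u} [Category.{v} C] [Preadditive C] [HasZeroObject C]
  [HasShift C ℤ] [∀ n : ℤ, (shiftFunctor C n).Additive] [Pretriangulated C]

lemma subsingleton_of_isZero {G : AddCommGrpCat.{v}} (h : IsZero G) : Subsingleton G := by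
  let e : G ≅ AddCommGrpCat.of PUnit.{v + 1} :=
    h.iso (AddCommGrpCat.isZero_of_subsingleton _)
  constructor
  intro a b
  have ha : (e.hom ≫ e.inv) a = a := by rw [e.hom_inv_id]; simp
  have hb : (e.hom ≫ e.inv) b = b := by rw [e.hom_inv_id]; simp
  have hab : e.hom a = e.hom b := Subsingleton.elim _ _
  calc a = (e.hom ≫ e.inv) a := ha.symm
  _ = e.inv (e.hom a) := comp_apply _ _ _
  _ = e.inv (e.hom b) := by rw [hab]
  _ = (e.hom ≫ e.inv) b := (comp_apply _ _ _).symm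
  _ = b := hb

lemma isZero_mocolim_obj {E : ℕ → C} (f : ∀ n, E n ⟶ E (n + 1)) {z : C}
    (h : ∀ (n : ℕ) (v : z ⟶ E n), v = 0) : IsZero ((mocolim f).obj (op z)) := by
  let D := Functor.ofSequence f ⋙ preadditiveYoneda (C := C)
  have hobj : ∀ n : ℕ, IsZero ((D ⋙ (evaluation Cᵒᵖ AddCommGrpCat.{v}).obj (op z)).obj n) := by
    intro n
    haveI : Subsingleton ((D ⋙ (evaluation Cᵒᵖ AddCommGrpCat.{v}).obj (op z)).obj n) :=
      ⟨fun v w => (h n v).trans (h n w).symm⟩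
    exact AddCommGrpCat.isZero_of_subsingleton _
  have hZ : IsZero (colimit (D ⋙ (evaluation Cᵒᵖ AddCommGrpCat.{v}).obj (op z))) := by
    rw [IsZero.iff_id_eq_zero]
    apply colimit.hom_ext
    intro n
    rw [Category.comp_id, comp_zero]
    exact (hobj n).eq_of_src _ _
  exact hZ.of_iso (colimitObjIsoColimitCompEvaluation D (op z))

lemma exists_seqMap_zero_of_isZero {E : ℕ → C} (f : ∀ n, E n ⟶ E (n + 1)) {z : C}
    (hz : IsZero ((mocolim f).obj (op z)))
    (m : ℕ) (v : z ⟶ E m) : ∃ (n : ℕ) (h : m ≤ n), v ≫ seqMap f h = 0 := by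
  let D := Functor.ofSequence f ⋙ preadditiveYoneda (C := C)
  let ev := (evaluation Cᵒᵖ AddCommGrpCat.{v}).obj (op z)
  have hc1 : IsColimit (ev.mapCocone (colimit.cocone D)) :=
    isColimitOfPreserves ev (colimit.isColimit D)
  haveI : PreservesColimitsOfShape ℕ (forget AddCommGrpCat.{v}) :=
    (preservesSmallestFilteredColimits_of_preservesFilteredColimits (forget AddCommGrpCat.{v})).preserves_filtered_colimits ℕ
  have hc2 : IsColimit ((forget AddCommGrpCat.{v}).mapCocone (ev.mapCocone (colimit.cocone D))) :=
    isColimitOfPreserves (forget AddCommGrpCat.{v}) hc1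
  have hsub : ∀ (x y : (forget AddCommGrpCat.{v}).obj ((mocolim f).obj (op z))), x = y :=
    fun x y => (subsingleton_of_isZero hz).elim x y
  have heq : ((forget AddCommGrpCat.{v}).mapCocone (ev.mapCocone (colimit.cocone D))).ι.app m v =
      ((forget AddCommGrpCat.{v}).mapCocone (ev.mapCocone (colimit.cocone D))).ι.app m
        (0 : z ⟶ E m) := hsub _ _
  obtain ⟨k, fk, gk, hk⟩ := (Types.FilteredColimit.isColimit_eq_iff _ hc2).mp heq
  refine ⟨k, leOfHom fk, ?_⟩
  have h1 : ((D ⋙ ev) ⋙ forget AddCommGrpCat.{v}).map fk v = v ≫ seqMap f (leOfHom fk) := by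
    have : fk = homOfLE (leOfHom fk) := Subsingleton.elim _ _
    rw [this]
    rfl
  have h2 : ((D ⋙ ev) ⋙ forget AddCommGrpCat.{v}).map gk (0 : z ⟶ E m) = 0 := by
    exact map_zero ((D.map gk).app (op z)).hom
  rw [h1, h2] at hk
  exact hk

end MetricCompletion
namespace MetricCompletion

open ZeroObject

set_option linter.unusedSectionVars false

variable {C : Type u} [Category.{v} C] [Preadditive C] [HasZeroObject C]
  [HasShift C ℤ] [∀ n : ℤ, (shiftFunctor C n).Additive] [Pretriangulated C]

lemma mocolim_iso_of_maps {E : ℕ → C} (f : ∀ n, E n ⟶ E (n + 1)) {A : C}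
    (g : ∀ n, E n ⟶ A) (hg : ∀ n, f n ≫ g (n + 1) = g n)
    (hsurj : ∀ (z : C) (u : z ⟶ A), ∃ (n : ℕ) (v : z ⟶ E n), v ≫ g n = u)
    (hinj : ∀ (z : C) (n : ℕ) (v : z ⟶ E n), v ≫ g n = 0 →
      ∃ (n' : ℕ) (h : n ≤ n'), v ≫ seqMap f h = 0) :
    Nonempty (mocolim f ≅ preadditiveYoneda.obj A) := by
  let D := Functor.ofSequence f ⋙ preadditiveYoneda (C := C)
  let cc : Cocone D :=
  { pt := preadditiveYoneda.obj A
    ι :=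
    { app := fun n => preadditiveYoneda.map (g n)
      naturality := fun m n hmn => by
        dsimp only [D, Functor.comp_map, Functor.const_obj_map, Functor.const_obj_obj]
        rw [Category.comp_id]
        erw [← Functor.map_comp]
        congr 1
        have h1 : hmn = homOfLE (leOfHom hmn) := Subsingleton.elim _ _
        rw [h1]
        exact seqMap_comp_fixed f g hg (leOfHom hmn) } }
  let φ : mocolim f ⟶ preadditiveYoneda.obj A := colimit.desc D cc
  have keyφ : ∀ (z : C) (n : ℕ) (v : z ⟶ E n),
      φ.app (op z) ((colimit.ι D n).app (op z) v) = v ≫ g n := by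
    intro z n v
    have h1 : colimit.ι D n ≫ φ = cc.ι.app n := colimit.ι_desc cc n
    have h2 : (colimit.ι D n).app (op z) ≫ φ.app (op z) = (cc.ι.app n).app (op z) := by
      rw [← NatTrans.comp_app, h1]
    have h3 := ConcreteCategory.congr_hom h2 v
    exact h3
  haveI : ∀ (zop : Cᵒᵖ), IsIso (φ.app zop) := by
    intro zop
    obtain ⟨z⟩ := zop
    let ev := (evaluation Cᵒᵖ AddCommGrpCat.{v}).obj (op z)
    have hc1 : IsColimit (ev.mapCocone (colimit.cocone D)) :=
      isColimitOfPreserves ev (colimit.isColimit D)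
    haveI : PreservesColimitsOfShape ℕ (forget AddCommGrpCat.{v}) :=
      (preservesSmallestFilteredColimits_of_preservesFilteredColimits
        (forget AddCommGrpCat.{v})).preserves_filtered_colimits ℕ
    have hc2 : IsColimit ((forget AddCommGrpCat.{v}).mapCocone (ev.mapCocone (colimit.cocone D))) :=
      isColimitOfPreserves (forget AddCommGrpCat.{v}) hc1
    rw [ConcreteCategory.isIso_iff_bijective]
    constructor
    · have hinj2 : Function.Injective (φ.app (op z)) := by
        rw [injective_iff_map_eq_zero]
        intro x hx
        obtain ⟨n, v, hv⟩ := Types.jointly_surjective _ hc2 x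
        have hv' : (colimit.ι D n).app (op z) v = x := hv
        rw [← hv'] at hx ⊢
        rw [keyφ z n v] at hx
        obtain ⟨n', h, h0⟩ := hinj z n v hx
        have hw : (colimit.ι D n).app (op z) v =
            (colimit.ι D n').app (op z) (v ≫ seqMap f h) := by
          have w := colimit.w D (homOfLE h)
          have w2 : (D.map (homOfLE h)).app (op z) ≫ (colimit.ι D n').app (op z) =
              (colimit.ι D n).app (op z) := by rw [← NatTrans.comp_app, w]
          have w3 := ConcreteCategory.congr_hom w2 v
          have w4 : (D.map (homOfLE h)).app (op z) v = v ≫ seqMap f h := rfl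
          exact w3.symm
        rw [hw]
        erw [h0]
        exact map_zero ((colimit.ι D n').app (op z)).hom
      exact hinj2
    · intro u
      obtain ⟨n, v, hv⟩ := hsurj z u
      refine ⟨(colimit.ι D n).app (op z) v, ?_⟩
      show (φ.app (op z)) ((colimit.ι D n).app (op z) v) = u
      rw [keyφ z n v]; exact hv
  haveI : IsIso φ := NatIso.isIso_of_isIso_app φ
  exact ⟨asIso φ⟩

end MetricCompletion
namespace MetricCompletion

open ZeroObject

set_option linter.unusedSectionVars false

variable {C : Type u} [Category.{v} C] [Preadditive C] [HasZeroObject C]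
  [HasShift C ℤ] [∀ n : ℤ, (shiftFunctor C n).Additive] [Pretriangulated C]

variable {X Y : Set C} (hT : TStruct X Y)
include hT

/-- Precomposition with the `Y`-truncation map is bijective on maps into `shiftSet Y t₀`. -/
lemma precomp_pi_bijective {t₀ : ℤ} {aa e bb w : C}
    (ι : aa ⟶ e) (π : e ⟶ bb) (δ : bb ⟶ aa⟦(1 : ℤ)⟧)
    (hdist : Triangle.mk ι π δ ∈ distTriang C)
    (ha : aa ∈ shiftSet X t₀) (hw : w ∈ shiftSet Y t₀) :
    Function.Bijective (fun (h : bb ⟶ w) => π ≫ h) := by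
  constructor
  · intro h₁ h₂ hh
    have hh' : π ≫ h₁ = π ≫ h₂ := hh
    have h3 : π ≫ (h₁ - h₂) = 0 := by
      rw [Preadditive.comp_sub, hh', sub_self]
    obtain ⟨g', hg'⟩ := Triangle.yoneda_exact₃ _ hdist (h₁ - h₂) h3
    have hg0 : g' = 0 :=
      hom_zero_shift hT (by omega : t₀ ≤ t₀ + 1) (shiftSet_shift ha 1 (t₀ + 1) rfl) hw g'
    rw [hg0, comp_zero] at hg'
    exact sub_eq_zero.mp hg'
  · intro u
    have h0 : ι ≫ u = 0 := hom_zero_shift hT le_rfl ha hw _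
    obtain ⟨g', hg'⟩ := Triangle.yoneda_exact₂ _ hdist u h0
    exact ⟨g', hg'.symm⟩

/-- If the cone of `g` is in `shiftSet X (t₀ + 2)`, precomposition with `g` is bijective
on maps into `shiftSet Y t₀`. -/
lemma precomp_cone_bijective {t₀ : ℤ} {e e' Z w : C}
    (g : e ⟶ e') (q : e' ⟶ Z) (r : Z ⟶ e⟦(1 : ℤ)⟧)
    (hdist : Triangle.mk g q r ∈ distTriang C)
    (hZ : Z ∈ shiftSet X (t₀ + 2)) (hw : w ∈ shiftSet Y t₀) :
    Function.Bijective (fun (h : e' ⟶ w) => g ≫ h) := by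
  constructor
  · intro h₁ h₂ hh
    have hh' : g ≫ h₁ = g ≫ h₂ := hh
    have h3 : g ≫ (h₁ - h₂) = 0 := by
      rw [Preadditive.comp_sub, hh', sub_self]
    obtain ⟨g2, hg2⟩ := Triangle.yoneda_exact₂ _ hdist (h₁ - h₂) h3
    have hg0 : g2 = 0 := hom_zero_shift hT (by omega : t₀ ≤ t₀ + 2) hZ hw g2
    rw [hg0, comp_zero] at hg2
    exact sub_eq_zero.mp hg2
  · intro u
    have hT' := inv_rot_of_distTriang _ hdist
    have h0 : (Triangle.mk g q r).invRotate.mor₁ ≫ u = 0 := by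
      apply hom_zero_shift hT (show t₀ ≤ t₀ + 1 by omega) ?_ hw
      exact shiftSet_shift hZ (-1) (t₀ + 1) (by ring)
    obtain ⟨g2, hg2⟩ := Triangle.yoneda_exact₂ _ hT' u h0
    exact ⟨g2, hg2.symm⟩

lemma isIso_of_cone {t₀ : ℤ} {e e' bb bb' aa aa' Z : C}
    (g : e ⟶ e') (q : e' ⟶ Z) (r : Z ⟶ e⟦(1 : ℤ)⟧)
    (hgZ : Triangle.mk g q r ∈ distTriang C) (hZ : Z ∈ shiftSet X (t₀ + 2))
    (ι : aa ⟶ e) (π : e ⟶ bb) (δ : bb ⟶ aa⟦(1 : ℤ)⟧)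
    (h1 : Triangle.mk ι π δ ∈ distTriang C)
    (ι' : aa' ⟶ e') (π' : e' ⟶ bb') (δ' : bb' ⟶ aa'⟦(1 : ℤ)⟧)
    (h2 : Triangle.mk ι' π' δ' ∈ distTriang C)
    (ha : aa ∈ shiftSet X t₀) (ha' : aa' ∈ shiftSet X t₀)
    (hb : bb ∈ shiftSet Y t₀) (hb' : bb' ∈ shiftSet Y t₀)
    (βm : bb ⟶ bb') (hβ : π ≫ βm = g ≫ π') : IsIso βm := by
  have main : ∀ w ∈ shiftSet Y t₀, Function.Bijective (fun (h : bb' ⟶ w) => βm ≫ h) := by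
    intro w hw
    have hcomp : (fun (h : bb ⟶ w) => π ≫ h) ∘ (fun (h : bb' ⟶ w) => βm ≫ h)
        = (fun (h : e' ⟶ w) => g ≫ h) ∘ (fun (h : bb' ⟶ w) => π' ≫ h) := by
      funext h
      show π ≫ βm ≫ h = g ≫ π' ≫ h
      rw [← Category.assoc, hβ, Category.assoc]
    have hb2 : Function.Bijective ((fun (h : bb ⟶ w) => π ≫ h) ∘
        (fun (h : bb' ⟶ w) => βm ≫ h)) := by
      rw [hcomp]
      exact (precomp_cone_bijective hT g q r hgZ hZ hw).comp
        (precomp_pi_bijective hT ι' π' δ' h2 ha' hw)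
    exact (Function.Bijective.of_comp_iff' (precomp_pi_bijective hT ι π δ h1 ha hw) _).mp hb2
  obtain ⟨γ, hγ⟩ := (main bb hb).2 (𝟙 bb)
  have hγ' : βm ≫ γ = 𝟙 bb := hγ
  have hγβ : γ ≫ βm = 𝟙 bb' := by
    apply (main bb' hb').1
    show βm ≫ γ ≫ βm = βm ≫ 𝟙 bb'
    rw [← Category.assoc, hγ', Category.comp_id, Category.id_comp]
  exact ⟨⟨γ, hγ', hγβ⟩⟩

end MetricCompletion
namespace MetricCompletion

open ZeroObject

set_option linter.unusedSectionVars false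
set_option maxHeartbeats 1000000

variable {C : Type u} [Category.{v} C] [Preadditive C] [HasZeroObject C]
  [HasShift C ℤ] [∀ n : ℤ, (shiftFunctor C n).Additive] [Pretriangulated C]

lemma shiftSet_cast {S : Set C} {s s' : ℤ} (h : s = s') : shiftSet S s = shiftSet S s' := by
  rw [h]

variable {X Y : Set C} (hT : TStruct X Y)
include hT

theorem exists_representing {E : ℕ → C} (f : ∀ n, E n ⟶ E (n + 1))
    (hC : CauchyWrt (aisleMetric X) f) (hS : CptSuppWrt (aisleMetric X) f) :
    ∃ (A : C) (p : ℤ), A ∈ shiftSet Y p ∧ Nonempty (mocolim f ≅ preadditiveYoneda.obj A) := by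
  classical
  obtain ⟨t₁, hsup₁⟩ := hS
  set t₀ : ℕ := t₁ + 1 with ht₀
  have hsup : CptSuppAt f (shiftSet X (t₀ : ℤ)) := by
    intro Z hZ
    apply hsup₁ Z
    apply aisleMetric_mono hT (Nat.le_succ t₁)
    rw [aisleMetric_eq_shiftSet X t₀ (by omega)]
    exact hZ
  -- choose approximation triangles
  choose a b ι π δ ha hb hdist using fun n => exists_approx_triangle hT (t₀ : ℤ) (E n)
  -- choose maps of triangles
  have hmaps : ∀ n, ∃ (αn : a n ⟶ a (n + 1)) (βn : b n ⟶ b (n + 1)),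
      ι n ≫ f n = αn ≫ ι (n + 1) ∧ π n ≫ βn = f n ≫ π (n + 1) ∧
        δ n ≫ αn⟦(1 : ℤ)⟧' = βn ≫ δ (n + 1) := by
    intro n
    obtain ⟨αn, hα⟩ := Triangle.coyoneda_exact₂ _ (hdist (n + 1)) (ι n ≫ f n)
      (hom_zero_shift hT le_rfl (ha n) (hb (n + 1)) _)
    obtain ⟨βn, hβ₁, hβ₂⟩ := complete_distinguished_triangle_morphism _ _
      (hdist n) (hdist (n + 1)) αn (f n) hα
    exact ⟨αn, βn, hα, hβ₁, hβ₂⟩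
  choose α β hαι hπβ hδα using hmaps
  -- iterated naturality squares
  have ι_nat : ∀ {m n : ℕ} (h : m ≤ n), ι m ≫ seqMap f h = seqMap α h ≫ ι n := by
    intro m n h
    induction n, h using Nat.le_induction with
    | base => rw [seqMap_refl', seqMap_refl', Category.comp_id, Category.id_comp]
    | succ n hmn ih =>
        rw [seqMap_trans' f hmn (Nat.le_succ n), seqMap_trans' α hmn (Nat.le_succ n),
          seqMap_succ', seqMap_succ', ← Category.assoc, ih, Category.assoc, Category.assoc,
          ← hαι n]
  have δ_nat : ∀ {m n : ℕ} (h : m ≤ n), seqMap β h ≫ δ n = δ m ≫ (seqMap α h)⟦(1 : ℤ)⟧' := by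
    intro m n h
    induction n, h using Nat.le_induction with
    | base => rw [seqMap_refl', seqMap_refl']; simp
    | succ n hmn ih =>
        rw [seqMap_trans' β hmn (Nat.le_succ n), seqMap_trans' α hmn (Nat.le_succ n),
          seqMap_succ', seqMap_succ', Category.assoc, ← hδα n, ← Category.assoc, ih,
          Category.assoc, ← Functor.map_comp]
  -- the null property from compact support
  have null : ∀ m, ∃ (n : ℕ) (h : m ≤ n), ι m ≫ seqMap f h = 0 := by
    intro m
    exact exists_seqMap_zero_of_isZero f (hsup (a m) (ha m)) m (ι m)
  -- α is a null sequence
  have αnull : ∀ m, ∃ (n : ℕ) (h : m ≤ n), seqMap α h = 0 := by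
    intro m
    obtain ⟨n, h, h0⟩ := null m
    have h1 : seqMap α h ≫ (Triangle.mk (ι n) (π n) (δ n)).invRotate.mor₂ = 0 := by
      show seqMap α h ≫ ι n = 0
      rw [ι_nat h] at h0
      exact h0
    obtain ⟨w, hw⟩ := Triangle.coyoneda_exact₂ _ (inv_rot_of_distTriang _ (hdist n))
      (seqMap α h) h1
    have hw0 : w = 0 :=
      hom_zero_shift hT (by omega : (t₀ : ℤ) - 1 ≤ (t₀ : ℤ)) (ha m)
        (shiftSet_shift (hb n) (-1) ((t₀ : ℤ) - 1) (by ring)) w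
    rw [hw0, zero_comp] at hw
    exact ⟨n, h, hw⟩
  -- Cauchy at level t₀ + 2
  obtain ⟨N, hN⟩ := hC (t₀ + 2)
  have hβiso : ∀ n, N ≤ n → IsIso (β n) := by
    intro n hn
    obtain ⟨Z, ⟨q, r, hZdist⟩, hZmem⟩ := hN n (n + 1) (Nat.lt_succ_self n) hn
    rw [seqMap_succ'] at hZdist
    have hZmem' : Z ∈ shiftSet X ((t₀ : ℤ) + 2) := by
      rw [← shiftSet_cast (show ((t₀ + 2 : ℕ) : ℤ) = (t₀ : ℤ) + 2 by push_cast; ring),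
        ← aisleMetric_eq_shiftSet X (t₀ + 2) (by omega)]
      exact hZmem
    exact isIso_of_cone hT (f n) q r hZdist hZmem' (ι n) (π n) (δ n) (hdist n)
      (ι (n + 1)) (π (n + 1)) (δ (n + 1)) (hdist (n + 1)) (ha n) (ha (n + 1))
      (hb n) (hb (n + 1)) (β n) (hπβ n)
  have hseqβiso : ∀ n (hn : N ≤ n), IsIso (seqMap β hn) := by
    intro n hn
    induction n, hn using Nat.le_induction with
    | base => rw [seqMap_refl']; infer_instance
    | succ n hn ih =>
        rw [seqMap_trans' β hn (Nat.le_succ n), seqMap_succ']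
        haveI := ih
        haveI := hβiso n hn
        apply IsIso.comp_isIso
  -- the stabilised maps to b N
  let hmap : ∀ n, b n ⟶ b N := fun n =>
    if hn : N ≤ n then @inv _ _ _ _ _ (hseqβiso n hn) else seqMap β (le_of_not_ge hn)
  have hmap_pos : ∀ n (hn : N ≤ n), hmap n = @inv _ _ _ _ _ (hseqβiso n hn) := by
    intro n hn
    exact dif_pos hn
  have hcompat : ∀ n, hmap n = β n ≫ hmap (n + 1) := by
    intro n
    by_cases hn : N ≤ n
    · have hn' : N ≤ n + 1 := hn.trans (Nat.le_succ n)
      rw [hmap_pos n hn, hmap_pos (n + 1) hn']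
      haveI := hseqβiso n hn
      haveI := hseqβiso (n + 1) hn'
      refine IsIso.inv_eq_of_hom_inv_id ?_
      rw [← Category.assoc, ← seqMap_succ' β (Nat.le_succ n),
        ← seqMap_trans' β hn (Nat.le_succ n) hn', IsIso.hom_inv_id]
    · by_cases hn' : N ≤ n + 1
      · have hNn : N = n + 1 := by omega
        subst hNn
        have e1 : hmap n = seqMap β (le_of_not_ge hn) := dif_neg hn
        have e2 : hmap (n + 1) = @inv _ _ _ _ _ (hseqβiso (n + 1) hn') := dif_pos hn'
        rw [e1, e2, seqMap_succ' β (le_of_not_ge hn)]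
        haveI := hseqβiso (n + 1) hn'
        symm
        rw [IsIso.comp_inv_eq, seqMap_refl' β hn', Category.comp_id]
      · have e1 : hmap n = seqMap β (le_of_not_ge hn) := dif_neg hn
        have e2 : hmap (n + 1) = seqMap β (le_of_not_ge hn') := dif_neg hn'
        rw [e1, e2,
          seqMap_trans' β (Nat.le_succ n) (le_of_not_ge hn') (le_of_not_ge hn), seqMap_succ']
  let g : ∀ n, E n ⟶ b N := fun n => π n ≫ hmap n
  have hg : ∀ n, f n ≫ g (n + 1) = g n := by
    intro n
    show f n ≫ π (n + 1) ≫ hmap (n + 1) = π n ≫ hmap n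
    rw [hcompat n, ← Category.assoc, ← hπβ n, Category.assoc]
  refine ⟨b N, (t₀ : ℤ), hb N, ?_⟩
  apply mocolim_iso_of_maps f g hg
  · -- surjectivity
    intro z u
    obtain ⟨n, hNn, hα0⟩ := αnull N
    have hδ0 : (u ≫ seqMap β hNn) ≫ (Triangle.mk (ι n) (π n) (δ n)).mor₃ = 0 := by
      show (u ≫ seqMap β hNn) ≫ δ n = 0
      rw [Category.assoc, δ_nat hNn, hα0, Functor.map_zero, comp_zero, comp_zero]
    obtain ⟨v, hv⟩ := Triangle.coyoneda_exact₃ _ (hdist n) (u ≫ seqMap β hNn) hδ0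
    have hv' : u ≫ seqMap β hNn = v ≫ π n := hv
    refine ⟨n, v, ?_⟩
    show v ≫ π n ≫ hmap n = u
    erw [← Category.assoc, ← hv', hmap_pos n hNn]
    haveI := hseqβiso n hNn
    rw [Category.assoc, IsIso.hom_inv_id, Category.comp_id]
  · -- injectivity
    intro z m v hv
    have hm1 : m ≤ max m N := le_max_left _ _
    have hm2 : N ≤ max m N := le_max_right _ _
    have hv' : (v ≫ seqMap f hm1) ≫ g (max m N) = 0 := by
      rw [Category.assoc, seqMap_comp_fixed f g hg hm1]
      exact hv
    have hπ0 : (v ≫ seqMap f hm1) ≫ π (max m N) = 0 := by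
      haveI := hseqβiso (max m N) hm2
      have hmono : Mono (hmap (max m N)) := by
        rw [hmap_pos (max m N) hm2]
        infer_instance
      have : ((v ≫ seqMap f hm1) ≫ π (max m N)) ≫ hmap (max m N) =
          0 ≫ hmap (max m N) := by
        rw [zero_comp, Category.assoc]
        exact hv'
      exact (cancel_mono (hmap (max m N))).mp this
    obtain ⟨w, hw⟩ := Triangle.coyoneda_exact₂ _ (hdist (max m N)) (v ≫ seqMap f hm1) hπ0
    have hw' : v ≫ seqMap f hm1 = w ≫ ι (max m N) := hw
    obtain ⟨n, hm'n, h0⟩ := null (max m N)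
    refine ⟨n, hm1.trans hm'n, ?_⟩
    erw [seqMap_trans' f hm1 hm'n (hm1.trans hm'n), ← Category.assoc, hw', Category.assoc,
      h0, comp_zero]

end MetricCompletion
namespace MetricCompletion

open ZeroObject

set_option linter.unusedSectionVars false
set_option maxHeartbeats 1000000

variable {C : Type u} [Category.{v} C] [Preadditive C] [HasZeroObject C]
  [HasShift C ℤ] [∀ n : ℤ, (shiftFunctor C n).Additive] [Pretriangulated C]

variable {X Y : Set C} (hT : TStruct X Y)
include hT

lemma yoneda_mem_completionSet [HasFiniteBiproducts C] {A : C}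
    (hA : A ∈ addClosure (⋃ p : ℤ, shiftSet Y p)) :
    preadditiveYoneda.obj A ∈ completionSet (aisleMetric X) := by
  obtain ⟨k, gg, hgg, i, r, hir⟩ := hA
  have hbound : ∃ t : ℕ, 1 ≤ t ∧ ∀ j : Fin k, ∃ p : ℤ, p ≤ (t : ℤ) ∧ gg j ∈ shiftSet Y p := by
    choose p hp using fun j => Set.mem_iUnion.mp (hgg j)
    refine ⟨(Finset.univ.sup fun j => (p j).toNat) + 1, by omega, fun j => ⟨p j, ?_, hp j⟩⟩
    have h1 : p j ≤ ((p j).toNat : ℤ) := Int.self_le_toNat _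
    have h2 : (p j).toNat ≤ Finset.univ.sup fun j => (p j).toNat :=
      Finset.le_sup (f := fun j => (p j).toNat) (Finset.mem_univ j)
    push_cast
    omega
  obtain ⟨t, ht1, hts⟩ := hbound
  refine ⟨fun _ => A, fun _ => 𝟙 A, ?_, ⟨t, ?_⟩, ?_⟩
  · intro s
    refine ⟨0, fun m m' h _ => ?_⟩
    refine ⟨(0 : C), ⟨0, 0, ?_⟩, zero_mem_aisleMetric hT s (isZero_zero C)⟩
    rw [seqMap_const_id]
    exact contractible_distinguished A
  · intro Z hZ
    rw [aisleMetric_eq_shiftSet X t ht1] at hZ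
    apply isZero_mocolim_obj
    intro n v
    have h0 : v ≫ i = 0 := by
      apply biproduct.hom_ext
      intro j
      obtain ⟨p, hpt, hgj⟩ := hts j
      rw [Category.assoc, zero_comp]
      exact hom_zero_shift hT hpt hZ hgj _
    calc v = v ≫ 𝟙 A := by rw [Category.comp_id]
    _ = v ≫ i ≫ r := by rw [← hir]
    _ = 0 := by rw [← Category.assoc, h0, zero_comp]
  · have hsurj : ∀ (z : C) (u : z ⟶ A), ∃ (n : ℕ) (v : z ⟶ A), v ≫ 𝟙 A = u :=
      fun z u => ⟨0, u, Category.comp_id u⟩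
    have hinj : ∀ (z : C) (n : ℕ) (v : z ⟶ A), v ≫ 𝟙 A = 0 →
        ∃ (n' : ℕ) (h : n ≤ n'), v ≫ seqMap (fun _ => 𝟙 A) h = 0 := by
      intro z n v hv
      rw [Category.comp_id] at hv
      exact ⟨n, le_rfl, by rw [seqMap_refl', Category.comp_id, hv]⟩
    obtain ⟨e⟩ := mocolim_iso_of_maps (fun _ => 𝟙 A) (fun _ => 𝟙 A)
      (fun n => Category.comp_id _) hsurj hinj
    exact ⟨e.symm⟩

end MetricCompletion

open MetricCompletion in
theorem aisleMetric_completion' {C : Type u} [Category.{v} C] [Preadditive C]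
    [HasZeroObject C] [HasShift C ℤ] [∀ n : ℤ, (shiftFunctor C n).Additive]
    [Pretriangulated C] [HasFiniteBiproducts C] (X Y : Set C) (hT : TStruct X Y) :
    Nonempty
      ((ObjectProperty.FullSubcategory fun F => F ∈ completionSet (aisleMetric X)) ≌
        (ObjectProperty.FullSubcategory fun A => A ∈ addClosure (⋃ p : ℤ, shiftSet Y p))) := by
  let G := ObjectProperty.lift (fun F : Cᵒᵖ ⥤ AddCommGrpCat.{v} => F ∈ completionSet (aisleMetric X))
      (ObjectProperty.ι (fun A : C => A ∈ addClosure (⋃ p : ℤ, shiftSet Y p)) ⋙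
        preadditiveYoneda)
      (fun Aobj => yoneda_mem_completionSet hT Aobj.2)
  haveI : G.Full := inferInstance
  haveI : G.Faithful := inferInstance
  haveI : G.EssSurj := by
    constructor
    rintro ⟨F, hF⟩
    obtain ⟨E, f, hC, hS, ⟨iF⟩⟩ := hF
    obtain ⟨A, p, hA, ⟨e⟩⟩ := exists_representing hT f hC hS
    have hmem : A ∈ addClosure (⋃ p : ℤ, shiftSet Y p) := by
      refine ⟨1, fun _ => A, fun i => Set.mem_iUnion.mpr ⟨p, hA⟩,
        biproduct.ι (fun _ : Fin 1 => A) (0 : Fin 1),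
        biproduct.π (fun _ : Fin 1 => A) (0 : Fin 1), by simp⟩
    refine ⟨⟨A, hmem⟩, ⟨?_⟩⟩
    have eiso : preadditiveYoneda.obj A ≅ F := e.symm ≪≫ iF.symm
    exact ObjectProperty.isoMk _ eiso
  haveI : G.IsEquivalence := { }
  exact ⟨G.asEquivalence.symm⟩
open MetricCompletion in
/-- the completion with respect to the aisle metric of a t-structure
`(X, Y)` is equivalent to `add (⋃_{p ∈ ℤ} Σ^p Y)`, a subcategory of `T`. -/
theorem aisleMetric_completion {C : Type u} [Category.{v} C] [Preadditive C]
    [HasZeroObject C] [HasShift C ℤ] [∀ n : ℤ, (shiftFunctor C n).Additive]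
    [Pretriangulated C] [HasFiniteBiproducts C] (X Y : Set C) (hT : TStruct X Y) :
    Nonempty
      ((ObjectProperty.FullSubcategory fun F => F ∈ completionSet (aisleMetric X)) ≌
        (ObjectProperty.FullSubcategory fun A => A ∈ addClosure (⋃ p : ℤ, shiftSet Y p))) := by
  exact aisleMetric_completion' X Y hT
end

section
/- Let Z ⊆ S¹ be an infinite discrete subset with finitely many accumulation points, each accumulation point being two-sided. Then every point z ∈ Z has a unique successor z⁺ ∈ Z (the unique point with (z, z⁺) ∩ Z = ∅, where the interval is taken in the cyclic order on S¹) and a unique predecessor z⁻ ∈ Z. -/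
open Filter Topology

namespace DiscreteCluster

/-- The circle `S¹`, modelled as `ℝ / ℤ`. -/
abbrev S1 : Type := AddCircle (1 : ℝ)

/-- Strict cyclic betweenness on the circle: walking anticlockwise from `a` we meet `b`
strictly before `c` (all three distinct). -/
def Sbtw1 (a b c : S1) : Prop :=
  ∃ x y z : ℝ, ((x : S1) = a) ∧ ((y : S1) = b) ∧ ((z : S1) = c) ∧
    x < y ∧ y < z ∧ z < x + 1

/-- `Z` accumulates at `a` from the clockwise side. -/
def LeftAcc (Z : Set S1) (a : S1) : Prop :=
  ∀ b : S1, b ≠ a → ∃ y ∈ Z, Sbtw1 b y a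

/-- `Z` accumulates at `a` from the anticlockwise side. -/
def RightAcc (Z : Set S1) (a : S1) : Prop :=
  ∀ c : S1, c ≠ a → ∃ y ∈ Z, Sbtw1 a y c

end DiscreteCluster

namespace DCAux

open DiscreteCluster Set

lemma coe_int_add (x : ℝ) (k : ℤ) : ((x + k : ℝ) : S1) = (x : S1) := by
  have h : ((k : ℝ) : S1) = 0 := by
    rw [AddCircle.coe_eq_zero_iff]; exact ⟨k, by simp⟩
  rw [AddCircle.coe_add, h, add_zero]

lemma coe_eq_coe' {x y : ℝ} (h : (x : S1) = (y : S1)) : ∃ k : ℤ, y = x + k := by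
  have h0 : ((y - x : ℝ) : S1) = 0 := by rw [AddCircle.coe_sub, ← h, sub_self]
  rw [AddCircle.coe_eq_zero_iff] at h0
  obtain ⟨k, hk⟩ := h0
  refine ⟨k, ?_⟩
  have h2 : (k : ℝ) = y - x := by simpa using hk
  linarith

lemma int_eq_zero {k : ℤ} (h1 : (-1 : ℝ) < k) (h2 : (k : ℝ) < 1) : k = 0 := by
  have h1' : (-1 : ℤ) < k := by exact_mod_cast h1
  have h2' : k < (1 : ℤ) := by exact_mod_cast h2
  omega

lemma coe_inj_Ioo {a x y : ℝ} (hx : x ∈ Ioo a (a + 1)) (hy : y ∈ Ioo a (a + 1))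
    (h : (x : S1) = (y : S1)) : x = y := by
  obtain ⟨k, hk⟩ := coe_eq_coe' h
  have hk0 : k = 0 := by
    refine int_eq_zero ?_ ?_
    · have := hx.2; have := hy.1; nlinarith [hk]
    · have := hx.1; have := hy.2; nlinarith [hk]
  rw [hk0] at hk; simpa using hk.symm

lemma exists_lift {a : ℝ} {b : S1} (hb : b ≠ (a : S1)) :
    ∃ t ∈ Ioo a (a + 1), (t : S1) = b := by
  have ht : ((AddCircle.equivIoc 1 a b : ℝ)) ∈ Ioc a (a + 1) := (AddCircle.equivIoc 1 a b).2
  have hcoe : (((AddCircle.equivIoc 1 a b : ℝ)) : S1) = b :=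
    (AddCircle.equivIoc 1 a).symm_apply_apply b
  set t := (AddCircle.equivIoc 1 a b : ℝ)
  refine ⟨t, ⟨ht.1, lt_of_le_of_ne ht.2 ?_⟩, hcoe⟩
  intro he
  apply hb
  rw [← hcoe, he]
  have := coe_int_add a 1
  push_cast at this
  exact this

lemma sbtw_iff {a b : ℝ} (hb : b ∈ Ioo a (a + 1)) (y : S1) :
    Sbtw1 (a : S1) y (b : S1) ↔ ∃ t ∈ Ioo a b, (t : S1) = y := by
  constructor
  · rintro ⟨x, y', z', hx, hy', hz', h1, h2, h3⟩
    obtain ⟨k, hk⟩ := coe_eq_coe' hx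
    have hz'' : ((z' + k : ℝ) : S1) = (b : S1) := by rw [coe_int_add, hz']
    have hz'mem : z' + k ∈ Ioo a (a + 1) := by constructor <;> [linarith; linarith]
    have heq : z' + k = b := coe_inj_Ioo hz'mem hb hz''
    refine ⟨y' + k, ⟨by linarith, by linarith⟩, ?_⟩
    rw [coe_int_add, hy']
  · rintro ⟨t, ht, rfl⟩
    exact ⟨a, t, b, rfl, rfl, rfl, ht.1, ht.2, hb.2⟩

lemma sbtw_tricho {a b c : S1} (hab : b ≠ a) (hac : c ≠ a) (hbc : b ≠ c) :
    Sbtw1 a b c ∨ Sbtw1 a c b := by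
  obtain ⟨aa, -, rfl⟩ := AddCircle.eq_coe_Ico a
  obtain ⟨bb, hbb, rfl⟩ := exists_lift hab
  obtain ⟨cc, hcc, rfl⟩ := exists_lift hac
  have hbcr : bb ≠ cc := fun e => hbc (by rw [e])
  rcases lt_or_gt_of_ne hbcr with h | h
  · exact Or.inl ⟨aa, bb, cc, rfl, rfl, rfl, hbb.1, h, hcc.2⟩
  · exact Or.inr ⟨aa, cc, bb, rfl, rfl, rfl, hcc.1, h, hbb.2⟩

lemma sbtw_neg {a b c : S1} (h : Sbtw1 a b c) : Sbtw1 (-c) (-b) (-a) := by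
  obtain ⟨x, y, z, hx, hy, hz, h1, h2, h3⟩ := h
  refine ⟨-z, -y, -x, ?_, ?_, ?_, by linarith, by linarith, by linarith⟩
  · rw [AddCircle.coe_neg, hz]
  · rw [AddCircle.coe_neg, hy]
  · rw [AddCircle.coe_neg, hx]

lemma sbtw_rot {a b c : S1} (h : Sbtw1 a b c) : Sbtw1 b c a := by
  obtain ⟨x, y, z, hx, hy, hz, h1, h2, h3⟩ := h
  refine ⟨y, z, x + 1, hy, hz, ?_, h2, h3, by linarith⟩
  rw [show ((x + 1 : ℝ) : S1) = ((x + ((1 : ℤ) : ℝ) : ℝ) : S1) by norm_num,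
    coe_int_add, hx]

lemma accPt_neg {Z : Set S1} {x : S1}
    (h : AccPt x (𝓟 ((fun w : S1 => -w) ⁻¹' Z))) : AccPt (-x) (𝓟 Z) := by
  rw [accPt_iff_nhds] at h ⊢
  intro U hU
  have hV : (fun w : S1 => -w) ⁻¹' U ∈ 𝓝 x := by
    have hc : Continuous (fun w : S1 => -w) := continuous_neg
    exact hc.continuousAt.preimage_mem_nhds (by simpa using hU)
  obtain ⟨y, ⟨hyU, hyZ⟩, hyx⟩ := h _ hV
  exact ⟨-y, ⟨hyU, hyZ⟩, fun e => hyx (neg_injective e)⟩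

lemma succ_exists (Z : Set S1) (z : S1) (hz : z ∈ Z)
    (hne : ∃ u ∈ Z, u ≠ z)
    (hd : ¬ AccPt z (𝓟 Z))
    (hl : ∀ a : S1, AccPt a (𝓟 Z) → LeftAcc Z a) :
    ∃ w : S1, w ∈ Z ∧ w ≠ z ∧ ∀ y ∈ Z, ¬ Sbtw1 z y w := by
  obtain ⟨zt, -, rfl⟩ := AddCircle.eq_coe_Ico z
  set T : Set ℝ := {t | t ∈ Ioo zt (zt + 1) ∧ (t : S1) ∈ Z} with hT
  obtain ⟨u, huZ, huz⟩ := hne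
  obtain ⟨ut, hut, hutc⟩ := exists_lift huz
  have hutT : ut ∈ T := ⟨hut, hutc ▸ huZ⟩
  have hTne : T.Nonempty := ⟨ut, hutT⟩
  have hTbd : BddBelow T := ⟨zt, fun t ht => le_of_lt ht.1.1⟩
  set m := sInf T with hm
  have hmle : ∀ t ∈ T, m ≤ t := fun t ht => csInf_le hTbd ht
  have hm1 : m < zt + 1 := lt_of_le_of_lt (hmle ut hutT) hut.2
  have hiso : ∃ ε > 0, ∀ t ∈ T, zt + ε ≤ t := by
    rw [accPt_iff_nhds] at hd
    push_neg at hd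
    obtain ⟨U, hU, hU2⟩ := hd
    have hV : (fun t : ℝ => (t : S1)) ⁻¹' U ∈ 𝓝 zt :=
      (AddCircle.continuous_mk' 1).continuousAt.preimage_mem_nhds hU
    obtain ⟨ε, hε, hball⟩ := Metric.mem_nhds_iff.mp hV
    refine ⟨min ε 1, by positivity, fun t ht => ?_⟩
    by_contra hlt
    push_neg at hlt
    have htb : t ∈ Metric.ball zt ε := by
      rw [Metric.mem_ball, Real.dist_eq, abs_lt]
      have h1 := ht.1.1
      have h2 : t < zt + ε := lt_of_lt_of_le hlt (by simp [min_le_left])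
      constructor <;> linarith
    have hts : (t : S1) = (zt : S1) := hU2 _ ⟨hball htb, ht.2⟩
    obtain ⟨k, hk⟩ := coe_eq_coe' hts
    have hk0 : k = 0 := by
      refine int_eq_zero ?_ ?_
      · have := ht.1.2; nlinarith [hk]
      · have := ht.1.1; nlinarith [hk]
    rw [hk0] at hk
    have := ht.1.1
    simp at hk
    linarith
  obtain ⟨ε, hε, hsep⟩ := hiso
  have hmz : zt < m := lt_of_lt_of_le (by linarith) (le_csInf hTne hsep)
  have hmIoo : m ∈ Ioo zt (zt + 1) := ⟨hmz, hm1⟩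
  have hmne : (m : S1) ≠ (zt : S1) := by
    intro h
    obtain ⟨k, hk⟩ := coe_eq_coe' h
    have hk0 : k = 0 := by
      refine int_eq_zero ?_ ?_
      · nlinarith [hk]
      · nlinarith [hk]
    rw [hk0] at hk; simp at hk; linarith
  by_cases hmZ : (m : S1) ∈ Z
  · refine ⟨(m : S1), hmZ, hmne, ?_⟩
    intro y hy hsb
    rw [sbtw_iff hmIoo] at hsb
    obtain ⟨t, ht, rfl⟩ := hsb
    exact absurd (hmle t ⟨⟨ht.1, ht.2.trans hm1⟩, hy⟩) (not_le.mpr ht.2)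
  · exfalso
    have hacc : AccPt (m : S1) (𝓟 Z) := by
      rw [accPt_iff_nhds]
      intro U hU
      have hV : (fun t : ℝ => (t : S1)) ⁻¹' U ∈ 𝓝 m :=
        (AddCircle.continuous_mk' 1).continuousAt.preimage_mem_nhds hU
      obtain ⟨δ, hδ, hball⟩ := Metric.mem_nhds_iff.mp hV
      have hex : ∃ t ∈ T, t < m + min δ 1 := by
        by_contra hcon; push_neg at hcon
        have h1 := le_csInf hTne hcon
        have h2 : (0 : ℝ) < min δ 1 := by positivity
        rw [← hm] at h1
        linarith
      obtain ⟨t, htT, htlt⟩ := hex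
      have htm : m < t :=
        lt_of_le_of_ne (hmle t htT) (fun e => hmZ (by rw [e]; exact htT.2))
      have htb : t ∈ Metric.ball m δ := by
        rw [Metric.mem_ball, Real.dist_eq, abs_lt]
        have h2 : t < m + δ := lt_of_lt_of_le htlt (by simp [min_le_left])
        constructor <;> linarith
      refine ⟨(t : S1), ⟨hball htb, htT.2⟩, ?_⟩
      intro h
      obtain ⟨k, hk⟩ := coe_eq_coe' h
      have htlt1 : t < m + 1 := lt_of_lt_of_le htlt (by simp [min_le_right])
      have hk0 : k = 0 := by
        refine int_eq_zero ?_ ?_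
        · nlinarith [hk]
        · nlinarith [hk]
      rw [hk0] at hk; simp at hk; linarith
    obtain ⟨y, hyZ, hsb⟩ := hl _ hacc (zt : S1) (Ne.symm hmne)
    rw [sbtw_iff hmIoo] at hsb
    obtain ⟨t, ht, rfl⟩ := hsb
    exact absurd (hmle t ⟨⟨ht.1, ht.2.trans hm1⟩, hyZ⟩) (not_le.mpr ht.2)

lemma succ_unique (Z : Set S1) (z : S1) {w₁ w₂ : S1}
    (h₁ : w₁ ∈ Z ∧ w₁ ≠ z ∧ ∀ y ∈ Z, ¬ Sbtw1 z y w₁)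
    (h₂ : w₂ ∈ Z ∧ w₂ ≠ z ∧ ∀ y ∈ Z, ¬ Sbtw1 z y w₂) : w₁ = w₂ := by
  by_contra hne
  rcases sbtw_tricho h₁.2.1 h₂.2.1 hne with h | h
  · exact h₂.2.2 w₁ h₁.1 h
  · exact h₁.2.2 w₂ h₂.1 h

lemma pred_unique (Z : Set S1) (z : S1) {w₁ w₂ : S1}
    (h₁ : w₁ ∈ Z ∧ w₁ ≠ z ∧ ∀ y ∈ Z, ¬ Sbtw1 w₁ y z)
    (h₂ : w₂ ∈ Z ∧ w₂ ≠ z ∧ ∀ y ∈ Z, ¬ Sbtw1 w₂ y z) : w₁ = w₂ := by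
  by_contra hne
  rcases sbtw_tricho h₁.2.1 h₂.2.1 hne with h | h
  · exact h₁.2.2 w₂ h₂.1 (sbtw_rot h)
  · exact h₂.2.2 w₁ h₁.1 (sbtw_rot h)

end DCAux

open DiscreteCluster in
/-- an infinite discrete subset of `S¹` with finitely many accumulation
points, all two-sided, has unique successors and predecessors. -/
theorem exists_unique_succ_pred (Z : Set S1)
    (hinf : Z.Infinite)
    (hdisc : ∀ z ∈ Z, ¬ AccPt z (Filter.principal Z))
    (hfin : {a : S1 | AccPt a (Filter.principal Z)}.Finite)
    (htwo : ∀ a : S1, AccPt a (Filter.principal Z) → LeftAcc Z a ∧ RightAcc Z a) :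
    ∀ z ∈ Z,
      (∃! w : S1, w ∈ Z ∧ w ≠ z ∧ ∀ y ∈ Z, ¬ Sbtw1 z y w) ∧
      (∃! w : S1, w ∈ Z ∧ w ≠ z ∧ ∀ y ∈ Z, ¬ Sbtw1 w y z) := by
  intro z hz
  have hne : ∃ u ∈ Z, u ≠ z := by
    obtain ⟨u, hu⟩ := (hinf.diff (Set.finite_singleton z)).nonempty
    exact ⟨u, hu.1, hu.2⟩
  constructor
  · obtain ⟨w, hw⟩ := DCAux.succ_exists Z z hz hne (hdisc z hz) (fun a ha => (htwo a ha).1)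
    exact ⟨w, hw, fun w' hw' => DCAux.succ_unique Z z hw' hw⟩
  · set N : Set S1 := (fun w : S1 => -w) ⁻¹' Z with hN
    have hNz : -z ∈ N := by simpa [hN] using hz
    have hne' : ∃ u ∈ N, u ≠ -z := by
      obtain ⟨u, huZ, huz⟩ := hne
      exact ⟨-u, by simpa [hN] using huZ, fun e => huz (neg_injective e)⟩
    have hdN : ¬ AccPt (-z) (𝓟 N) := fun h => hdisc z hz (by simpa using DCAux.accPt_neg h)
    have hlN : ∀ a : S1, AccPt a (𝓟 N) → LeftAcc N a := by
      intro a ha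
      have haZ : AccPt (-a) (𝓟 Z) := DCAux.accPt_neg ha
      have hra := (htwo _ haZ).2
      intro b hb
      obtain ⟨y, hyZ, hsb⟩ := hra (-b) (fun e => hb (neg_injective e))
      refine ⟨-y, by simpa [hN] using hyZ, ?_⟩
      have h2 := DCAux.sbtw_neg hsb
      simpa using h2
    obtain ⟨w', hw'⟩ := DCAux.succ_exists N (-z) hNz hne' hdN hlN
    have hwP : (-w') ∈ Z ∧ -w' ≠ z ∧ ∀ y ∈ Z, ¬ Sbtw1 (-w') y z := by
      refine ⟨by simpa [hN] using hw'.1, fun e => hw'.2.1 (by rw [← e, neg_neg]), ?_⟩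
      intro y hy hsb
      have h2 := DCAux.sbtw_neg hsb
      rw [neg_neg] at h2
      exact hw'.2.2 (-y) (by simpa [hN] using hy) h2
    exact ⟨-w', hwP, fun w₂ hw₂ => DCAux.pred_unique Z z hw₂ hwP⟩
end
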